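/- arXiv:0909.1134 — 4 statements merged into one kernel-verified Lean document; each statement's English description precedes it below -/
import Mathlib

section
/- The map Φ from facets of Λ_d to S_d(X,(∞,a)) is a bijection, with inverse Ψ. -/
/-
Within one block, an `a`-subset `s₀ < s₁ < ⋯` of `range N` is determined by its weakly increasing
gap sequence `sⱼ - j`: `φ` keeps the nonzero gaps and `ψ` pads them with zeros back to length `a`,
so `ψ ∘ φ` and `φ ∘ ψ` are identities. Filling `τ ∩ Vᵢ` only adds elements below the first element
it leaves out, so `fl(τ,i) = range bᵢ ∪ ((τ ∩ Vᵢ) \ range bᵢ)` and `Φᵢ(τ)` records exactly the part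
of `τ ∩ Vᵢ` outside `V[τ]`. Concatenating the segments `range bᵢ` identifies `V[τ]` with
`range (∑ bᵢ)`, on which `Φ₀` encodes `τ ∩ V[τ]`; counting gives `∑ bᵢ - |τ ∩ V[τ]| = |X₀|`, so
`Φ₀(τ)` lives on `X₀`. Conversely `Ψ(μ) ∩ Vᵢ` is `ρ(μ_{X_i})` plus a subset of `range bᵢ`, which
filling completes to `ψ(μ_{X_i})`; hence `Φᵢ(Ψ(μ)) = μ_{X_i}`, the sets `V[Ψ(μ)]` and `V[μ]`
agree, and `Φ₀(Ψ(μ)) = φ(ψ(μ_{X₀})) = μ_{X₀}`.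
-/

open Finset

/-- The one-block map `φ` (0-based encoding of an ordered set in listing order; output is the
multiset of 1-based variable indices). -/
def phiMap (τ : Finset ℕ) : Multiset ℕ :=
  ↑(((τ.sort (· ≤ ·)).zipIdx.map Prod.swap |>.map (fun p => p.2 - p.1)).filter (fun x => x ≠ 0))

/-- The "non-initial-segment" part `ρ(Y,W)` of the inverse map `ψ(Y,W)`, for an ambient
ordered set `W` whose `a`-subsets are matched with monomials. -/
def rhoMap (a : ℕ) (μ : Multiset ℕ) : Finset ℕ :=
  ((μ.sort (· ≤ ·)).zipIdx.map Prod.swap |>.map (fun p => p.2 + p.1 + (a - Multiset.card μ))).toFinset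

/-- The one-block map `ψ(Y,W) = σ ∪ ρ`. -/
def psiMap (a : ℕ) (μ : Multiset ℕ) : Finset ℕ :=
  Finset.range (a - Multiset.card μ) ∪ rhoMap a μ

/-- `fl(τ,i)`: the revlex-first `k`-subset of `range N` containing `s` (add the earliest
missing elements). -/
def fillF (s : Finset ℕ) (k N : ℕ) : Finset ℕ :=
  s ∪ ((((Finset.range N) \ s).sort (· ≤ ·)).take (k - s.card)).toFinset

/-- A facet of `Λ_d`, encoded blockwise: `τ i ⊆ V_i = range (n i)` with `|τ i| ≤ a i`
(for `i < m`) and `∑ |τ i| = d`. -/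
def IsFacetT (m d : ℕ) (n a : ℕ → ℕ) (τ : ℕ → Finset ℕ) : Prop :=
  (∀ i, i < m → τ i ⊆ Finset.range (n i)) ∧ (∀ i, i < m → (τ i).card ≤ a i) ∧
  (∀ i, m ≤ i → τ i = ∅) ∧ (∑ i ∈ Finset.range m, (τ i).card) = d

/-- `Φ_i(τ) = φ(V_i, X_i)(fl(τ,i))`. -/
def PhiBlock (a n : ℕ → ℕ) (τ : ℕ → Finset ℕ) (i : ℕ) : Multiset ℕ :=
  phiMap (fillF (τ i) (a i) (n i))

/-- `b i = a i - deg Φ_i(τ)`, the size of the block-`i` part of `V[τ]`. -/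
def bfun (a n : ℕ → ℕ) (τ : ℕ → Finset ℕ) (i : ℕ) : ℕ :=
  a i - Multiset.card (PhiBlock a n τ i)

/-- Offsets identifying `V[τ] = ⋃ᵢ (first `b i` elements of `V_i`)` with `range (∑ b)`. -/
def offF (b : ℕ → ℕ) (i : ℕ) : ℕ := ∑ t ∈ Finset.range i, b t

/-- `τ ∩ V[τ]`, as a subset of `range (∑ b)` via the order isomorphism. -/
def globF (m : ℕ) (b : ℕ → ℕ) (τ : ℕ → Finset ℕ) : Finset ℕ :=
  (Finset.range m).biUnion (fun i => ((τ i) ∩ Finset.range (b i)).image (fun j => offF b i + j))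

/-- The full map `Φ`: index `0` gives the `X₀`-part `Φ₀(τ) = φ(V[τ],X₀)(τ ∩ V[τ])`, and index
`i+1 ≤ m` gives the `X_i`-part `Φ_i(τ)`. -/
def PhiMapT (m : ℕ) (a n : ℕ → ℕ) (τ : ℕ → Finset ℕ) : ℕ → Multiset ℕ :=
  fun i => if i = 0 then phiMap (globF m (bfun a n τ) τ)
    else if i ≤ m then PhiBlock a n τ (i - 1) else 0

/-- Membership in `S_d(X,(∞,a))`, blockwise: `μ 0` is the `X₀`-part (`|X₀| = ∑ a - d`) and
`μ (i+1)` is the `X_i`-part (`|X_i| = n i - a i`, of degree at most `a i`). -/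
def InST (m d : ℕ) (n a : ℕ → ℕ) (μ : ℕ → Multiset ℕ) : Prop :=
  (∑ i ∈ Finset.range (m + 1), Multiset.card (μ i)) ≤ d ∧
  (∀ i, i < m → Multiset.card (μ (i + 1)) ≤ a i) ∧
  (∀ x ∈ μ 0, 1 ≤ x ∧ x ≤ (∑ i ∈ Finset.range m, a i) - d) ∧
  (∀ i, i < m → ∀ x ∈ μ (i + 1), 1 ≤ x ∧ x ≤ n i - a i) ∧
  (∀ i, m + 1 ≤ i → μ i = 0)

/-- The inverse map `Ψ`: `Ψ(μ) ∩ V_i = Ψ_i(μ) ∪ (block-i part of Ψ₀(μ))` where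
`Ψ_i(μ) = ρ(X_i,V_i)(μ_{X_i})` and `Ψ₀(μ) = ψ(X₀,V[μ])(μ_{X₀}) ⊆ V[μ] ≅ range (∑ b)`. -/
def PsiMapT (m d : ℕ) (n a : ℕ → ℕ) (μ : ℕ → Multiset ℕ) : ℕ → Finset ℕ :=
  fun i =>
    if i < m then
      rhoMap (a i) (μ (i + 1)) ∪
        ((psiMap ((∑ t ∈ Finset.range m, (a t - Multiset.card (μ (t + 1)))) -
              ((∑ t ∈ Finset.range m, a t) - d)) (μ 0) ∩
            Finset.Ico (offF (fun t => a t - Multiset.card (μ (t + 1))) i)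
              (offF (fun t => a t - Multiset.card (μ (t + 1))) i +
                (a i - Multiset.card (μ (i + 1))))).image
          (fun j => j - offF (fun t => a t - Multiset.card (μ (t + 1))) i))
    else ∅

section Concatenation

variable {b : ℕ → ℕ} {m : ℕ}

lemma offF_succ (b : ℕ → ℕ) (i : ℕ) : offF b (i + 1) = offF b i + b i :=
  sum_range_succ b i

lemma offF_mono (b : ℕ → ℕ) {i j : ℕ} (h : i ≤ j) : offF b i ≤ offF b j :=
  sum_le_sum_of_subset (range_subset_range.mpr h)

lemma offF_add_inj {i i' j j' : ℕ} (hj : j < b i) (hj' : j' < b i')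
    (h : offF b i + j = offF b i' + j') : i = i' ∧ j = j' := by
  rcases lt_trichotomy i i' with hlt | rfl | hlt
  · have := offF_mono b (Nat.succ_le_of_lt hlt)
    rw [offF_succ] at this
    omega
  · omega
  · have := offF_mono b (Nat.succ_le_of_lt hlt)
    rw [offF_succ] at this
    omega

lemma exists_eq_offF_add {x : ℕ} (hx : x < offF b m) :
    ∃ i < m, ∃ j < b i, x = offF b i + j := by
  induction m with
  | zero => simp [offF] at hx
  | succ m ih =>
    rw [offF_succ] at hx
    by_cases h : x < offF b m
    · obtain ⟨i, hi, j, hj, rfl⟩ := ih h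
      exact ⟨i, by omega, j, hj, rfl⟩
    · exact ⟨m, by omega, x - offF b m, by omega, by omega⟩

def blockSlice (b : ℕ → ℕ) (P : Finset ℕ) (i : ℕ) : Finset ℕ :=
  (P ∩ Ico (offF b i) (offF b i + b i)).image (fun j => j - offF b i)

lemma mem_blockSlice {P : Finset ℕ} {i j : ℕ} :
    j ∈ blockSlice b P i ↔ j < b i ∧ offF b i + j ∈ P := by
  simp only [blockSlice, mem_image, mem_inter, mem_Ico]
  constructor
  · rintro ⟨x, ⟨hx, h1, h2⟩, rfl⟩
    exact ⟨by omega, by rwa [Nat.add_sub_cancel' h1]⟩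
  · rintro ⟨hj, hP⟩
    exact ⟨_, ⟨hP, by omega, by omega⟩, by omega⟩

lemma blockSlice_subset_range (b : ℕ → ℕ) (P : Finset ℕ) (i : ℕ) :
    blockSlice b P i ⊆ range (b i) :=
  fun _ hj => mem_range.mpr (mem_blockSlice.mp hj).1

lemma mem_globF {S : ℕ → Finset ℕ} {x : ℕ} :
    x ∈ globF m b S ↔ ∃ i < m, ∃ j ∈ S i, j < b i ∧ x = offF b i + j := by
  simp only [globF, mem_biUnion, mem_range, mem_image, mem_inter]
  constructor
  · rintro ⟨i, hi, j, ⟨hj, hjb⟩, rfl⟩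
    exact ⟨i, hi, j, hj, hjb, rfl⟩
  · rintro ⟨i, hi, j, hj, hjb, rfl⟩
    exact ⟨i, hi, j, ⟨hj, hjb⟩, rfl⟩

lemma globF_subset_range (S : ℕ → Finset ℕ) : globF m b S ⊆ range (offF b m) := by
  intro x hx
  obtain ⟨i, hi, j, -, hj, rfl⟩ := mem_globF.mp hx
  have := offF_mono b (Nat.succ_le_of_lt hi)
  rw [offF_succ] at this
  rw [mem_range]
  omega

lemma blockSlice_globF (S : ℕ → Finset ℕ) {i : ℕ} (hi : i < m) :
    blockSlice b (globF m b S) i = S i ∩ range (b i) := by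
  ext j
  rw [mem_blockSlice, mem_globF, mem_inter, mem_range]
  constructor
  · rintro ⟨hj, i', -, j', hj', hj'b, h⟩
    obtain ⟨rfl, rfl⟩ := offF_add_inj hj hj'b h
    exact ⟨hj', hj⟩
  · rintro ⟨hj, hjb⟩
    exact ⟨hjb, i, hi, j, hj, hjb, rfl⟩

lemma globF_blockSlice {P : Finset ℕ} (hP : P ⊆ range (offF b m)) :
    globF m b (blockSlice b P) = P := by
  ext x
  rw [mem_globF]
  constructor
  · rintro ⟨i, -, j, hj, -, rfl⟩
    exact (mem_blockSlice.mp hj).2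
  · intro hx
    obtain ⟨i, hi, j, hj, rfl⟩ := exists_eq_offF_add (mem_range.mp (hP hx))
    exact ⟨i, hi, j, mem_blockSlice.mpr ⟨hj, hx⟩, hj, rfl⟩

lemma card_globF (S : ℕ → Finset ℕ) :
    (globF m b S).card = ∑ i ∈ range m, (S i ∩ range (b i)).card := by
  rw [globF, card_biUnion]
  · exact sum_congr rfl fun i _ => card_image_of_injective _ (add_right_injective _)
  · intro i _ i' _ hii'
    simp only [Function.onFun, disjoint_left, mem_image, mem_inter, mem_range]
    rintro _ ⟨j, ⟨-, hj⟩, rfl⟩ ⟨j', ⟨-, hj'⟩, h⟩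
    exact hii' (offF_add_inj hj hj' h.symm).1

lemma sum_card_blockSlice {P : Finset ℕ} (hP : P ⊆ range (offF b m)) :
    ∑ i ∈ range m, (blockSlice b P i).card = P.card := by
  conv_rhs => rw [← globF_blockSlice hP, card_globF]
  refine sum_congr rfl fun i _ => ?_
  rw [inter_eq_left.mpr (blockSlice_subset_range b P i)]

lemma offF_congr {b' : ℕ → ℕ} {i : ℕ} (h : ∀ t < i, b t = b' t) : offF b i = offF b' i :=
  sum_congr rfl fun t ht => h t (mem_range.mp ht)

lemma blockSlice_congr {b' : ℕ → ℕ} (P : Finset ℕ) {i : ℕ} (h : ∀ t ≤ i, b t = b' t) :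
    blockSlice b P i = blockSlice b' P i := by
  rw [blockSlice, blockSlice, offF_congr fun t ht => h t ht.le, h i le_rfl]

lemma globF_congr {b' : ℕ → ℕ} {S S' : ℕ → Finset ℕ} (hb : ∀ t < m, b t = b' t)
    (hS : ∀ t < m, S t ∩ range (b t) = S' t ∩ range (b' t)) : globF m b S = globF m b' S' :=
  biUnion_congr rfl fun i hi => by
    rw [hS i (mem_range.mp hi), offF_congr fun t ht => hb t (ht.trans (mem_range.mp hi))]

end Concatenation

section StrictlySorted

variable {L : List ℕ}

lemma getElem_add_le_getElem_add (hL : L.Pairwise (· < ·)) {i k : ℕ} (hk : i + k < L.length) :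
    L[i] + k ≤ L[i + k] := by
  induction k with
  | zero => simp
  | succ k ih =>
    have h := List.pairwise_iff_getElem.mp hL (i + k) (i + (k + 1)) (by omega) hk (by omega)
    have := ih (by omega)
    omega

lemma le_getElem_of_pairwise_lt (hL : L.Pairwise (· < ·)) {j : ℕ} (hj : j < L.length) :
    j ≤ L[j] := by
  have := getElem_add_le_getElem_add hL (i := 0) (k := j) (by omega)
  simp only [Nat.zero_add] at this
  omega

lemma getElem_add_length_le (hL : L.Pairwise (· < ·)) {N j : ℕ} (hN : ∀ x ∈ L, x < N)
    (hj : j < L.length) :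
    L[j] + (L.length - j) ≤ N := by
  have h := getElem_add_le_getElem_add hL (i := j) (k := L.length - 1 - j) (by omega)
  have := hN _ (List.getElem_mem (show j + (L.length - 1 - j) < L.length by omega))
  omega

end StrictlySorted

lemma eq_replicate_zero_append_filter {g : List ℕ} (hg : g.Pairwise (· ≤ ·)) :
    g = List.replicate (g.length - (g.filter (· ≠ 0)).length) 0 ++ g.filter (· ≠ 0) := by
  induction g with
  | nil => rfl
  | cons x g ih =>
    rcases Nat.eq_zero_or_pos x with rfl | hx
    · have h := ih hg.of_cons
      rw [List.filter_cons_of_neg (by simp), List.length_cons,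
        show g.length + 1 - (g.filter (· ≠ 0)).length =
          (g.length - (g.filter (· ≠ 0)).length) + 1 by
            have := List.length_filter_le (· ≠ 0) g; omega,
        List.replicate_succ, List.cons_append, ← h]
    · have hpos : ∀ y ∈ x :: g, y ≠ 0 := by
        intro y hy
        rcases List.mem_cons.mp hy with rfl | hy
        · omega
        · have := List.rel_of_pairwise_cons hg hy; omega
      rw [List.filter_eq_self.mpr (by simpa using hpos)]
      simp

section OneBlock

def gapList (L : List ℕ) : List ℕ := (L.zipIdx.map Prod.swap).map (fun p => p.2 - p.1)

@[simp] lemma length_gapList (L : List ℕ) : (gapList L).length = L.length := by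
  simp [gapList]

@[simp] lemma getElem_gapList (L : List ℕ) (j : ℕ) (h : j < (gapList L).length) :
    (gapList L)[j] = L[j]'(by simpa using h) - j := by
  simp [gapList]

lemma pairwise_le_gapList {L : List ℕ} (hL : L.Pairwise (· < ·)) :
    (gapList L).Pairwise (· ≤ ·) := by
  refine List.pairwise_iff_getElem.mpr fun i j hi hj hij => ?_
  simp only [length_gapList] at hi hj
  have := getElem_add_le_getElem_add hL (i := i) (k := j - i) (by omega)
  simp only [getElem_gapList, Nat.add_sub_cancel' hij.le] at this ⊢
  omega

lemma eq_of_gapList_eq {L L' : List ℕ} (hL : L.Pairwise (· < ·)) (hL' : L'.Pairwise (· < ·))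
    (h : gapList L = gapList L') : L = L' := by
  have hlen : L.length = L'.length := by simpa using congrArg List.length h
  refine List.ext_getElem hlen fun j hj hj' => ?_
  have := List.getElem_of_eq h (i := j) (by simpa using hj)
  simp only [getElem_gapList] at this
  have := le_getElem_of_pairwise_lt hL hj
  have := le_getElem_of_pairwise_lt hL' hj'
  omega

lemma phiMap_eq_filter_gapList (s : Finset ℕ) :
    phiMap s = ↑((gapList (s.sort (· ≤ ·))).filter (· ≠ 0)) := rfl

lemma one_le_of_mem_phiMap {s : Finset ℕ} {x : ℕ} (hx : x ∈ phiMap s) : 1 ≤ x := by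
  rw [phiMap_eq_filter_gapList, Multiset.mem_coe, List.mem_filter] at hx
  simpa [Nat.one_le_iff_ne_zero] using hx.2

lemma card_phiMap_le (s : Finset ℕ) : Multiset.card (phiMap s) ≤ s.card := by
  rw [phiMap_eq_filter_gapList, Multiset.coe_card]
  exact (List.length_filter_le _ _).trans (by simp)

lemma add_length_le_of_mem_gapList {L : List ℕ} (hL : L.Pairwise (· < ·)) {N x : ℕ}
    (hN : ∀ y ∈ L, y < N) (hx : x ∈ gapList L) : x + L.length ≤ N := by
  obtain ⟨j, hj, rfl⟩ := List.mem_iff_getElem.mp hx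
  rw [length_gapList] at hj
  have := le_getElem_of_pairwise_lt hL hj
  have := getElem_add_length_le hL hN hj
  rw [getElem_gapList]
  omega

lemma add_card_le_of_mem_phiMap {s : Finset ℕ} {N x : ℕ} (hs : s ⊆ range N)
    (hx : x ∈ phiMap s) : x + s.card ≤ N := by
  rw [phiMap_eq_filter_gapList, Multiset.mem_coe] at hx
  rw [← length_sort (· ≤ ·)]
  exact add_length_le_of_mem_gapList (List.sortedLT_iff_pairwise.mp (sortedLT_sort s))
    (fun y hy => mem_range.mp (hs ((mem_sort _).mp hy))) (List.mem_of_mem_filter hx)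

def stairList (t : ℕ) (u : List ℕ) : List ℕ :=
  List.range t ++ (u.zipIdx.map Prod.swap).map (fun p => p.2 + p.1 + t)

@[simp] lemma length_stairList (t : ℕ) (u : List ℕ) :
    (stairList t u).length = t + u.length := by
  simp [stairList]

lemma getElem_stairList (t : ℕ) (u : List ℕ) (j : ℕ) (h : j < (stairList t u).length) :
    (stairList t u)[j] =
      if hj : j < t then j else u[j - t]'(by simp at h; omega) + (j - t) + t := by
  simp only [stairList, List.getElem_append, List.length_range, List.getElem_range,
    List.getElem_map, List.getElem_zipIdx, Prod.swap]
  split_ifs <;> simp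

lemma psiMap_eq_toFinset_stairList (a : ℕ) (μ : Multiset ℕ) :
    psiMap a μ = (stairList (a - Multiset.card μ) (μ.sort (· ≤ ·))).toFinset := by
  simp [psiMap, rhoMap, stairList, List.toFinset_append, List.toFinset_range]

lemma gapList_stairList (t : ℕ) (u : List ℕ) :
    gapList (stairList t u) = List.replicate t 0 ++ u := by
  refine List.ext_getElem (by simp) fun j h _ => ?_
  rw [getElem_gapList, getElem_stairList]
  simp only [List.getElem_append, List.length_replicate, List.getElem_replicate]
  split_ifs <;> omega

lemma pairwise_lt_stairList (t : ℕ) {u : List ℕ} (hu : u.Pairwise (· ≤ ·))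
    (hu1 : ∀ x ∈ u, 1 ≤ x) : (stairList t u).Pairwise (· < ·) := by
  refine List.pairwise_iff_getElem.mpr fun i j hi hj hij => ?_
  rw [getElem_stairList, getElem_stairList]
  split_ifs with hit hjt hjt
  · exact hij
  · omega
  · have := hu1 _ (List.getElem_mem (show j - t < u.length by simp at hj; omega))
    omega
  · rcases eq_or_lt_of_le (show i - t ≤ j - t by omega) with h | h
    · simp only [h]; omega
    · have := List.pairwise_iff_getElem.mp hu (i - t) (j - t) (by simp at hi; omega)
        (by simp at hj; omega) h
      omega

lemma sort_coe_of_pairwise {u : List ℕ} (hu : u.Pairwise (· ≤ ·)) :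
    (u : Multiset ℕ).sort (· ≤ ·) = u :=
  List.Perm.eq_of_pairwise' (Multiset.pairwise_sort _ _) hu
    (Multiset.coe_eq_coe.mp (Multiset.sort_eq _ _))

lemma sort_eq_stairList (s : Finset ℕ) :
    s.sort (· ≤ ·) =
      stairList (s.card - Multiset.card (phiMap s)) ((phiMap s).sort (· ≤ ·)) := by
  have hL : (s.sort (· ≤ ·)).Pairwise (· < ·) :=
    List.sortedLT_iff_pairwise.mp (sortedLT_sort s)
  have hg := pairwise_le_gapList hL
  set u := (gapList (s.sort (· ≤ ·))).filter (· ≠ 0) with hu_def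
  have hu : u.Pairwise (· ≤ ·) := hg.filter _
  have hu1 : ∀ x ∈ u, 1 ≤ x := fun x hx => one_le_of_mem_phiMap (s := s) hx
  rw [phiMap_eq_filter_gapList, ← hu_def, sort_coe_of_pairwise hu, Multiset.coe_card]
  refine eq_of_gapList_eq hL (pairwise_lt_stairList _ hu hu1) ?_
  rw [gapList_stairList, ← length_sort (· ≤ ·), ← length_gapList]
  exact eq_replicate_zero_append_filter hg

lemma psiMap_card_phiMap (s : Finset ℕ) : psiMap s.card (phiMap s) = s := by
  rw [psiMap_eq_toFinset_stairList, ← sort_eq_stairList, sort_toFinset]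

lemma sort_psiMap {a : ℕ} {μ : Multiset ℕ} (hμ : ∀ x ∈ μ, 1 ≤ x) :
    (psiMap a μ).sort (· ≤ ·) = stairList (a - Multiset.card μ) (μ.sort (· ≤ ·)) := by
  have h := pairwise_lt_stairList (a - Multiset.card μ) (Multiset.pairwise_sort μ (· ≤ ·))
    (fun x hx => hμ x ((Multiset.mem_sort _).mp hx))
  rw [psiMap_eq_toFinset_stairList]
  exact (List.toFinset_sort _ h.nodup).mpr (h.imp le_of_lt)

lemma phiMap_psiMap {a : ℕ} {μ : Multiset ℕ} (hμ : ∀ x ∈ μ, 1 ≤ x) :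
    phiMap (psiMap a μ) = μ := by
  rw [phiMap_eq_filter_gapList, sort_psiMap hμ, gapList_stairList, List.filter_append,
    List.filter_replicate, List.filter_eq_self.mpr]
  · simp
  · intro x hx
    have := hμ x ((Multiset.mem_sort _).mp hx)
    simp only [ne_eq, decide_eq_true_eq]
    omega

lemma card_psiMap {a : ℕ} {μ : Multiset ℕ} (hμ : ∀ x ∈ μ, 1 ≤ x)
    (hμa : Multiset.card μ ≤ a) :
    (psiMap a μ).card = a := by
  rw [← length_sort (· ≤ ·), sort_psiMap hμ, length_stairList, Multiset.length_sort]
  omega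

lemma mem_rhoMap {a y : ℕ} {μ : Multiset ℕ} : y ∈ rhoMap a μ ↔
    ∃ k, ∃ hk : k < (μ.sort (· ≤ ·)).length,
      y = (μ.sort (· ≤ ·))[k] + k + (a - Multiset.card μ) := by
  simp only [rhoMap, List.mem_toFinset, List.mem_iff_getElem, List.getElem_map,
    List.getElem_zipIdx, Prod.swap, List.length_map, List.length_zipIdx, Nat.zero_add]
  exact ⟨fun ⟨k, hk, h⟩ => ⟨k, hk, h.symm⟩, fun ⟨k, hk, h⟩ => ⟨k, hk, h.symm⟩⟩

lemma lt_of_mem_rhoMap {a y : ℕ} {μ : Multiset ℕ} (hμ : ∀ x ∈ μ, 1 ≤ x)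
    (hy : y ∈ rhoMap a μ) : a - Multiset.card μ < y := by
  obtain ⟨k, hk, rfl⟩ := mem_rhoMap.mp hy
  have := hμ _ ((Multiset.mem_sort _).mp (List.getElem_mem hk))
  omega

lemma psiMap_subset_range {a N : ℕ} {μ : Multiset ℕ} (hμa : Multiset.card μ ≤ a)
    (hμN : ∀ x ∈ μ, x + a ≤ N) (haN : a ≤ N) : psiMap a μ ⊆ range N := by
  intro y hy
  rw [mem_range]
  rcases mem_union.mp hy with hy | hy
  · rw [mem_range] at hy
    omega
  · obtain ⟨k, hk, rfl⟩ := mem_rhoMap.mp hy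
    have := hμN _ ((Multiset.mem_sort _).mp (List.getElem_mem hk))
    rw [Multiset.length_sort] at hk
    omega

lemma disjoint_range_rhoMap {a : ℕ} {μ : Multiset ℕ} (hμ : ∀ x ∈ μ, 1 ≤ x) :
    Disjoint (range (a - Multiset.card μ)) (rhoMap a μ) :=
  disjoint_left.mpr fun y hy hy' => by
    have := lt_of_mem_rhoMap hμ hy'
    rw [mem_range] at hy
    omega

lemma card_rhoMap {a : ℕ} {μ : Multiset ℕ} (hμ : ∀ x ∈ μ, 1 ≤ x)
    (hμa : Multiset.card μ ≤ a) :
    (rhoMap a μ).card = Multiset.card μ := by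
  have h := card_psiMap hμ hμa
  rw [psiMap, card_union_of_disjoint (disjoint_range_rhoMap hμ), card_range] at h
  omega

end OneBlock

section Fill

lemma mem_take_of_lt_of_pairwise_lt {L : List ℕ} (hL : L.Pairwise (· < ·)) {n x y : ℕ}
    (hx : x ∈ L.take n) (hy : y ∈ L) (hyx : y < x) : y ∈ L.take n := by
  obtain ⟨p, hp, rfl⟩ := List.mem_iff_getElem.mp hx
  obtain ⟨q, hq, rfl⟩ := List.mem_iff_getElem.mp hy
  rw [List.length_take] at hp
  rw [List.getElem_take] at hyx
  have hqp : q < p := by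
    by_contra! hpq
    rcases eq_or_lt_of_le hpq with rfl | hlt
    · exact lt_irrefl _ hyx
    · exact lt_asymm hyx (List.pairwise_iff_getElem.mp hL p q (by omega) hq hlt)
  exact List.mem_iff_getElem.mpr ⟨q, by rw [List.length_take]; omega, List.getElem_take⟩

variable {s : Finset ℕ} {k N : ℕ}

lemma subset_fillF (s : Finset ℕ) (k N : ℕ) : s ⊆ fillF s k N := subset_union_left

lemma mem_of_mem_fillF_of_notMem {x : ℕ} (hx : x ∈ fillF s k N) (hxs : x ∉ s) :
    x ∈ (((range N \ s).sort (· ≤ ·)).take (k - s.card)) := by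
  rw [fillF, mem_union, List.mem_toFinset] at hx
  exact hx.resolve_left hxs

lemma fillF_subset_range (hs : s ⊆ range N) : fillF s k N ⊆ range N := by
  intro x hx
  by_cases hxs : x ∈ s
  · exact hs hxs
  · have := List.mem_of_mem_take (mem_of_mem_fillF_of_notMem hx hxs)
    exact (mem_sdiff.mp ((mem_sort _).mp this)).1

lemma card_fillF (hs : s ⊆ range N) (hsk : s.card ≤ k) (hkN : k ≤ N) :
    (fillF s k N).card = k := by
  have hsN : s.card ≤ N := (card_le_card hs).trans (card_range N).le
  have hdisj : Disjoint s ((((range N) \ s).sort (· ≤ ·)).take (k - s.card)).toFinset :=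
    disjoint_left.mpr fun x hx hx' =>
      (mem_sdiff.mp ((mem_sort _).mp (List.mem_of_mem_take (List.mem_toFinset.mp hx')))).2 hx
  rw [fillF, card_union_of_disjoint hdisj,
    List.toFinset_card_of_nodup ((List.take_sublist _ _).nodup (sort_nodup _ _)),
    List.length_take, length_sort, card_sdiff_of_subset hs, card_range]
  omega

lemma mem_fillF_of_lt (hs : s ⊆ range N) {x y : ℕ} (hx : x ∈ fillF s k N) (hxs : x ∉ s)
    (hy : y < x) : y ∈ fillF s k N := by
  by_cases hys : y ∈ s
  · exact subset_fillF s k N hys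
  have hxN : x < N := mem_range.mp (fillF_subset_range hs hx)
  have hyL : y ∈ (range N \ s).sort (· ≤ ·) :=
    (mem_sort _).mpr (mem_sdiff.mpr ⟨mem_range.mpr (by omega), hys⟩)
  exact mem_union_right _ (List.mem_toFinset.mpr (mem_take_of_lt_of_pairwise_lt
    (sortedLT_sort _).pairwise (mem_of_mem_fillF_of_notMem hx hxs) hyL hy))

lemma sdiff_range_eq_rhoMap_fillF (hs : s ⊆ range N) (hsk : s.card ≤ k) (hkN : k ≤ N) :
    s \ range (k - Multiset.card (phiMap (fillF s k N))) = rhoMap k (phiMap (fillF s k N)) := by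
  set F := fillF s k N
  set t := k - Multiset.card (phiMap F)
  have hμ : ∀ x ∈ phiMap F, 1 ≤ x := fun x hx => one_le_of_mem_phiMap hx
  have hF : F = range t ∪ rhoMap k (phiMap F) := by
    conv_lhs => rw [← psiMap_card_phiMap F, card_fillF hs hsk hkN]
    rfl
  have htF : t ∉ F := by
    rw [hF, mem_union, mem_range]
    rintro (h | h)
    · exact lt_irrefl _ h
    · exact lt_irrefl _ (lt_of_mem_rhoMap hμ h)
  -- `fillF` only adds elements below every element it leaves out, and it leaves out `t`.
  have hmem : ∀ x ∈ F, t < x → x ∈ s := fun x hx htx => by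
    by_contra hxs
    exact htF (mem_fillF_of_lt hs hx hxs htx)
  ext y
  rw [mem_sdiff, mem_range]
  constructor
  · rintro ⟨hys, hyt⟩
    have hyF : y ∈ F := subset_fillF s k N hys
    rw [hF, mem_union, mem_range] at hyF
    exact hyF.resolve_left hyt
  · intro hy
    have hty := lt_of_mem_rhoMap hμ hy
    exact ⟨hmem y (hF ▸ mem_union_right _ hy) hty, by omega⟩

lemma fillF_union_eq {Q R : Finset ℕ} {b : ℕ} (hQ : Q ⊆ range b) (hR : ∀ x ∈ R, b ≤ x)
    (hRN : R ⊆ range N) (hbk : b ≤ k) (hkN : k ≤ N) (hRk : R.card = k - b) :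
    fillF (Q ∪ R) k N = range b ∪ R := by
  have hdisj : Disjoint (range b) R :=
    disjoint_left.mpr fun x hx hx' => by have := hR x hx'; rw [mem_range] at hx; omega
  have hQR : Q ∪ R ⊆ range N :=
    union_subset (hQ.trans (range_subset_range.mpr (hbk.trans hkN))) hRN
  have hcard : (Q ∪ R).card ≤ k := by
    have := card_union_le Q R
    have := (card_le_card hQ).trans (card_range b).le
    omega
  have hF := card_fillF hQR hcard hkN
  have hsize : (range b ∪ R).card = k := by
    rw [card_union_of_disjoint hdisj, card_range, hRk]
    omega
  refine eq_of_subset_of_card_le (fun x hx => ?_) (by rw [hF, hsize])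
  by_contra hx'
  have hxQR : x ∉ Q ∪ R := fun h => hx' (union_subset_union hQ subset_rfl h)
  have hbx : b ≤ x := by
    by_contra! h
    exact hx' (mem_union_left _ (mem_range.mpr h))
  have hsub : insert x (range b ∪ R) ⊆ fillF (Q ∪ R) k N := insert_subset hx <|
    union_subset (fun y hy => mem_fillF_of_lt hQR hx hxQR (by rw [mem_range] at hy; omega))
      (subset_union_right.trans (subset_fillF _ k N))
  have := card_le_card hsub
  rw [card_insert_of_notMem hx', hsize, hF] at this
  omega

end Fill

section Maps

variable {m d : ℕ} {n a : ℕ → ℕ}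

lemma PhiMapT_zero (τ : ℕ → Finset ℕ) :
    PhiMapT m a n τ 0 = phiMap (globF m (bfun a n τ) τ) :=
  if_pos rfl

lemma PhiMapT_succ (τ : ℕ → Finset ℕ) {i : ℕ} (hi : i < m) :
    PhiMapT m a n τ (i + 1) = PhiBlock a n τ i := by
  simp [PhiMapT, Nat.succ_le_of_lt hi]

lemma PhiMapT_of_lt (τ : ℕ → Finset ℕ) {i : ℕ} (hi : m < i) : PhiMapT m a n τ i = 0 := by
  simp [PhiMapT, show i ≠ 0 by omega, show ¬ i ≤ m by omega]

/-- `a_i - deg μ_{X_i}`, the number of elements of `V_i` in `V[μ]`. -/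
def frontSize (a : ℕ → ℕ) (μ : ℕ → Multiset ℕ) (i : ℕ) : ℕ :=
  a i - Multiset.card (μ (i + 1))

/-- `Ψ₀(μ) = ψ(X₀,V[μ])(μ_{X₀})`, with `V[μ]` identified with `range (∑ frontSize)`. -/
def psiZero (m d : ℕ) (a : ℕ → ℕ) (μ : ℕ → Multiset ℕ) : Finset ℕ :=
  psiMap (offF (frontSize a μ) m - (∑ i ∈ range m, a i - d)) (μ 0)

lemma PsiMapT_of_lt (μ : ℕ → Multiset ℕ) {i : ℕ} (hi : i < m) :
    PsiMapT m d n a μ i =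
      rhoMap (a i) (μ (i + 1)) ∪ blockSlice (frontSize a μ) (psiZero m d a μ) i := by
  simp only [PsiMapT, if_pos hi]
  rfl

lemma PsiMapT_of_le (μ : ℕ → Multiset ℕ) {i : ℕ} (hi : m ≤ i) :
    PsiMapT m d n a μ i = ∅ :=
  if_neg (not_lt.mpr hi)

end Maps

section Forward

variable {m d : ℕ} {n a : ℕ → ℕ} {τ : ℕ → Finset ℕ}

lemma card_PhiBlock_le (hτ : IsFacetT m d n a τ) (ha : ∀ i < m, a i ≤ n i) {i : ℕ}
    (hi : i < m) : Multiset.card (PhiBlock a n τ i) ≤ a i :=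
  (card_phiMap_le _).trans (card_fillF (hτ.1 i hi) (hτ.2.1 i hi) (ha i hi)).le

lemma mem_PhiBlock_bounds (hτ : IsFacetT m d n a τ) (ha : ∀ i < m, a i ≤ n i) {i x : ℕ}
    (hi : i < m) (hx : x ∈ PhiBlock a n τ i) : 1 ≤ x ∧ x ≤ n i - a i := by
  have := add_card_le_of_mem_phiMap (fillF_subset_range (k := a i) (hτ.1 i hi)) hx
  rw [card_fillF (hτ.1 i hi) (hτ.2.1 i hi) (ha i hi)] at this
  exact ⟨one_le_of_mem_phiMap hx, by omega⟩

lemma sdiff_range_bfun (hτ : IsFacetT m d n a τ) (ha : ∀ i < m, a i ≤ n i) {i : ℕ}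
    (hi : i < m) : τ i \ range (bfun a n τ i) = rhoMap (a i) (PhiBlock a n τ i) :=
  sdiff_range_eq_rhoMap_fillF (hτ.1 i hi) (hτ.2.1 i hi) (ha i hi)

lemma card_inter_range_bfun_add (hτ : IsFacetT m d n a τ) (ha : ∀ i < m, a i ≤ n i) {i : ℕ}
    (hi : i < m) :
    (τ i ∩ range (bfun a n τ i)).card + Multiset.card (PhiBlock a n τ i) = (τ i).card := by
  rw [← card_inter_add_card_sdiff (τ i) (range (bfun a n τ i)), sdiff_range_bfun hτ ha hi,
    card_rhoMap (μ := PhiBlock a n τ i) (fun x hx => one_le_of_mem_phiMap hx)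
      (card_PhiBlock_le hτ ha hi)]

lemma offF_bfun_add (hτ : IsFacetT m d n a τ) (ha : ∀ i < m, a i ≤ n i) :
    offF (bfun a n τ) m + ∑ i ∈ range m, Multiset.card (PhiBlock a n τ i) =
      ∑ i ∈ range m, a i := by
  rw [offF, ← sum_add_distrib]
  exact sum_congr rfl fun i hi => Nat.sub_add_cancel (card_PhiBlock_le hτ ha (mem_range.mp hi))

lemma card_globF_bfun_add (hτ : IsFacetT m d n a τ) (ha : ∀ i < m, a i ≤ n i) :
    (globF m (bfun a n τ) τ).card + ∑ i ∈ range m, Multiset.card (PhiBlock a n τ i) = d := by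
  rw [card_globF, ← sum_add_distrib, ← hτ.2.2.2]
  exact sum_congr rfl fun i hi => card_inter_range_bfun_add hτ ha (mem_range.mp hi)

theorem PhiMapT_mem_InST (hτ : IsFacetT m d n a τ) (ha : ∀ i < m, a i ≤ n i) :
    InST m d n a (PhiMapT m a n τ) := by
  have hcount := card_globF_bfun_add hτ ha
  have hoff := offF_bfun_add hτ ha
  refine ⟨?_, fun i hi => ?_, fun x hx => ?_, fun i hi x hx => ?_, fun i hi => ?_⟩
  · rw [sum_range_succ', sum_congr rfl fun i hi => by rw [PhiMapT_succ τ (mem_range.mp hi)],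
      PhiMapT_zero]
    have := card_phiMap_le (globF m (bfun a n τ) τ)
    omega
  · rw [PhiMapT_succ τ hi]
    exact card_PhiBlock_le hτ ha hi
  · rw [PhiMapT_zero] at hx
    have := add_card_le_of_mem_phiMap (globF_subset_range τ) hx
    exact ⟨one_le_of_mem_phiMap hx, by omega⟩
  · rw [PhiMapT_succ τ hi] at hx
    exact mem_PhiBlock_bounds hτ ha hi hx
  · exact PhiMapT_of_lt τ (by omega)

theorem PsiMapT_PhiMapT (hτ : IsFacetT m d n a τ) (ha : ∀ i < m, a i ≤ n i) :
    PsiMapT m d n a (PhiMapT m a n τ) = τ := by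
  funext i
  rcases lt_or_ge i m with hi | hi
  · have hb : ∀ t < m, frontSize a (PhiMapT m a n τ) t = bfun a n τ t := fun t ht => by
      rw [frontSize, PhiMapT_succ τ ht, bfun]
    have hcount := card_globF_bfun_add hτ ha
    have hoff := offF_bfun_add hτ ha
    have hsize : offF (bfun a n τ) m - (∑ i ∈ range m, a i - d) =
        (globF m (bfun a n τ) τ).card := by
      have := (card_le_card (globF_subset_range (m := m) (b := bfun a n τ) τ)).trans_eq
        (card_range _)
      omega
    rw [PsiMapT_of_lt _ hi, blockSlice_congr _ fun t ht => hb t (by omega), psiZero,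
      offF_congr hb, hsize, PhiMapT_zero, psiMap_card_phiMap, blockSlice_globF τ hi,
      PhiMapT_succ τ hi, ← sdiff_range_bfun hτ ha hi, sdiff_union_inter]
  · rw [PsiMapT_of_le _ hi, hτ.2.2.1 i hi]

end Forward

section Backward

variable {m d : ℕ} {n a : ℕ → ℕ} {μ : ℕ → Multiset ℕ}

lemma InST.one_le_of_mem_zero (hμ : InST m d n a μ) : ∀ x ∈ μ 0, 1 ≤ x :=
  fun x hx => (hμ.2.2.1 x hx).1

lemma InST.one_le_of_mem_succ (hμ : InST m d n a μ) {i : ℕ} (hi : i < m) :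
    ∀ x ∈ μ (i + 1), 1 ≤ x :=
  fun x hx => (hμ.2.2.2.1 i hi x hx).1

lemma offF_frontSize_add (hμ : InST m d n a μ) :
    offF (frontSize a μ) m + ∑ i ∈ range m, Multiset.card (μ (i + 1)) =
      ∑ i ∈ range m, a i := by
  rw [offF, ← sum_add_distrib]
  exact sum_congr rfl fun i hi => Nat.sub_add_cancel (hμ.2.1 i (mem_range.mp hi))

lemma card_zero_add_sum_card_le (hμ : InST m d n a μ) :
    Multiset.card (μ 0) + ∑ i ∈ range m, Multiset.card (μ (i + 1)) ≤ d := by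
  have := hμ.1
  rwa [sum_range_succ', add_comm] at this

lemma psiZero_size (hμ : InST m d n a μ) (hd : d ≤ ∑ i ∈ range m, a i) :
    offF (frontSize a μ) m - (∑ i ∈ range m, a i - d) =
      d - ∑ i ∈ range m, Multiset.card (μ (i + 1)) := by
  have := offF_frontSize_add hμ
  have := card_zero_add_sum_card_le hμ
  omega

lemma card_psiZero (hμ : InST m d n a μ) (hd : d ≤ ∑ i ∈ range m, a i) :
    (psiZero m d a μ).card = d - ∑ i ∈ range m, Multiset.card (μ (i + 1)) := by
  have := card_zero_add_sum_card_le hμ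
  rw [psiZero, psiZero_size hμ hd, card_psiMap hμ.one_le_of_mem_zero (by omega)]

lemma psiZero_subset_range (hμ : InST m d n a μ) (hd : d ≤ ∑ i ∈ range m, a i) :
    psiZero m d a μ ⊆ range (offF (frontSize a μ) m) := by
  have := offF_frontSize_add hμ
  have := card_zero_add_sum_card_le hμ
  rw [psiZero, psiZero_size hμ hd]
  exact psiMap_subset_range (by omega) (fun x hx => by have := (hμ.2.2.1 x hx).2; omega)
    (by omega)

lemma phiMap_psiZero (hμ : InST m d n a μ) : phiMap (psiZero m d a μ) = μ 0 :=
  phiMap_psiMap hμ.one_le_of_mem_zero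

lemma rhoMap_subset_range (hμ : InST m d n a μ) (ha : ∀ i < m, a i ≤ n i) {i : ℕ}
    (hi : i < m) :
    rhoMap (a i) (μ (i + 1)) ⊆ range (n i) :=
  subset_union_right.trans <| psiMap_subset_range (hμ.2.1 i hi)
    (fun x hx => by have := hμ.2.2.2.1 i hi x hx; have := ha i hi; omega) (ha i hi)

lemma frontSize_lt_of_mem_rhoMap (hμ : InST m d n a μ) {i y : ℕ} (hi : i < m)
    (hy : y ∈ rhoMap (a i) (μ (i + 1))) : frontSize a μ i < y :=
  lt_of_mem_rhoMap (hμ.one_le_of_mem_succ hi) hy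

lemma fillF_PsiMapT (hμ : InST m d n a μ) (ha : ∀ i < m, a i ≤ n i) {i : ℕ} (hi : i < m) :
    fillF (PsiMapT m d n a μ i) (a i) (n i) = psiMap (a i) (μ (i + 1)) := by
  rw [PsiMapT_of_lt μ hi, union_comm]
  exact fillF_union_eq (blockSlice_subset_range _ _ i)
    (fun y hy => (frontSize_lt_of_mem_rhoMap hμ hi hy).le) (rhoMap_subset_range hμ ha hi)
    (Nat.sub_le _ _) (ha i hi)
    (by rw [card_rhoMap (hμ.one_le_of_mem_succ hi) (hμ.2.1 i hi)]
        exact (Nat.sub_sub_self (hμ.2.1 i hi)).symm)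

lemma PhiBlock_PsiMapT (hμ : InST m d n a μ) (ha : ∀ i < m, a i ≤ n i) {i : ℕ}
    (hi : i < m) :
    PhiBlock a n (PsiMapT m d n a μ) i = μ (i + 1) := by
  rw [PhiBlock, fillF_PsiMapT hμ ha hi, phiMap_psiMap (hμ.one_le_of_mem_succ hi)]

lemma PsiMapT_inter_range (hμ : InST m d n a μ) {i : ℕ} (hi : i < m) :
    PsiMapT m d n a μ i ∩ range (frontSize a μ i) =
      blockSlice (frontSize a μ) (psiZero m d a μ) i := by
  rw [PsiMapT_of_lt μ hi, union_inter_distrib_right,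
    inter_eq_left.mpr (blockSlice_subset_range _ _ i),
    disjoint_iff_inter_eq_empty.mp, empty_union]
  exact disjoint_left.mpr fun y hy hy' =>
    (mem_range.mp hy').not_gt (frontSize_lt_of_mem_rhoMap hμ hi hy)

lemma card_PsiMapT (hμ : InST m d n a μ) {i : ℕ} (hi : i < m) :
    (PsiMapT m d n a μ i).card =
      Multiset.card (μ (i + 1)) + (blockSlice (frontSize a μ) (psiZero m d a μ) i).card := by
  rw [PsiMapT_of_lt μ hi, card_union_of_disjoint,
    card_rhoMap (hμ.one_le_of_mem_succ hi) (hμ.2.1 i hi)]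
  exact disjoint_left.mpr fun y hy hy' =>
    (mem_range.mp (blockSlice_subset_range _ _ i hy')).not_gt
      (frontSize_lt_of_mem_rhoMap hμ hi hy)

theorem PsiMapT_mem_IsFacetT (hμ : InST m d n a μ) (hd : d ≤ ∑ i ∈ range m, a i)
    (ha : ∀ i < m, a i ≤ n i) : IsFacetT m d n a (PsiMapT m d n a μ) := by
  refine ⟨fun i hi => ?_, fun i hi => ?_, fun i hi => PsiMapT_of_le μ hi, ?_⟩
  · rw [PsiMapT_of_lt μ hi]
    exact union_subset (rhoMap_subset_range hμ ha hi) ((blockSlice_subset_range _ _ i).trans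
      (range_subset_range.mpr ((Nat.sub_le _ _).trans (ha i hi))))
  · have hslice : (blockSlice (frontSize a μ) (psiZero m d a μ) i).card ≤
        a i - Multiset.card (μ (i + 1)) :=
      (card_le_card (blockSlice_subset_range _ _ i)).trans_eq (card_range _)
    have := hμ.2.1 i hi
    rw [card_PsiMapT hμ hi]
    omega
  · have := card_zero_add_sum_card_le hμ
    rw [sum_congr rfl fun i hi => card_PsiMapT hμ (mem_range.mp hi), sum_add_distrib,
      sum_card_blockSlice (psiZero_subset_range hμ hd), card_psiZero hμ hd]
    omega

theorem PhiMapT_PsiMapT (hμ : InST m d n a μ) (hd : d ≤ ∑ i ∈ range m, a i)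
    (ha : ∀ i < m, a i ≤ n i) : PhiMapT m a n (PsiMapT m d n a μ) = μ := by
  have hb : ∀ i < m, bfun a n (PsiMapT m d n a μ) i = frontSize a μ i := fun i hi => by
    rw [bfun, PhiBlock_PsiMapT hμ ha hi, frontSize]
  funext j
  rcases j with _ | i
  · rw [PhiMapT_zero, globF_congr hb fun i hi => ?_,
      globF_blockSlice (psiZero_subset_range hμ hd), phiMap_psiZero hμ]
    rw [hb i hi, PsiMapT_inter_range hμ hi, inter_eq_left.mpr (blockSlice_subset_range _ _ i)]
  · rcases lt_or_ge i m with hi | hi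
    · rw [PhiMapT_succ _ hi, PhiBlock_PsiMapT hμ ha hi]
    · rw [PhiMapT_of_lt _ (by omega), hμ.2.2.2.2 (i + 1) (by omega)]

end Backward

theorem stmt10_general (m d : ℕ) (n a : ℕ → ℕ)
    (hd2 : d ≤ ∑ i ∈ Finset.range m, a i)
    (ha : ∀ i, i < m → 0 < a i ∧ a i ≤ n i) :
    (∀ τ : ℕ → Finset ℕ, IsFacetT m d n a τ →
      InST m d n a (PhiMapT m a n τ) ∧ PsiMapT m d n a (PhiMapT m a n τ) = τ) ∧
    (∀ μ : ℕ → Multiset ℕ, InST m d n a μ →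
      IsFacetT m d n a (PsiMapT m d n a μ) ∧ PhiMapT m a n (PsiMapT m d n a μ) = μ) := by
  have haN : ∀ i < m, a i ≤ n i := fun i hi => (ha i hi).2
  exact ⟨fun τ hτ => ⟨PhiMapT_mem_InST hτ haN, PsiMapT_PhiMapT hτ haN⟩,
    fun μ hμ => ⟨PsiMapT_mem_IsFacetT hμ hd2 haN, PhiMapT_PsiMapT hμ hd2 haN⟩⟩

/-- `Φ` and `Ψ` are mutually inverse bijections between the facets of `Λ_d` and the
monomials of `S_d(X,(∞,a))`. -/
theorem stmt10 (m d : ℕ) (n a : ℕ → ℕ)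
    (hd1 : 1 ≤ d) (hd2 : d ≤ ∑ i ∈ Finset.range m, a i)
    (ha : ∀ i, i < m → 0 < a i ∧ a i ≤ n i) :
    (∀ τ : ℕ → Finset ℕ, IsFacetT m d n a τ →
      InST m d n a (PhiMapT m a n τ) ∧ PsiMapT m d n a (PhiMapT m a n τ) = τ) ∧
    (∀ μ : ℕ → Multiset ℕ, InST m d n a μ →
      IsFacetT m d n a (PsiMapT m d n a μ) ∧ PhiMapT m a n (PsiMapT m d n a μ) = μ) :=
  stmt10_general m d n a hd2 ha
end

section
/- Let τ be a facet of Λ_d, γ ⊂ τ a proper subset not containing R(τ), and let bk(τ,γ) := (τ − v) ∪ w be the swap facet (v ∈ R(τ) − γ, w = Gap(τ) if v ∈ tail(τ), else w = fgap(τ,i) for v ∈ up(τ)∩V_i). Then |R(bk(τ,γ))| ≤ |R(τ)|; indeed R(bk(τ,γ)) ⊆ (R(τ) ∪ {w}) − {v}. -/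
open Finset

/-- The block-`i` part of `up(τ)`. -/
def upT (a n : ℕ → ℕ) (τ : ℕ → Finset ℕ) (i : ℕ) : Finset ℕ :=
  if (τ i).card = a i then
    (τ i).filter (fun j => ∃ g ∈ Finset.range (n i) \ τ i, g < j) else ∅

/-- The block-`i` part of `tail(τ)`. -/
def tailT (m : ℕ) (a n : ℕ → ℕ) (τ : ℕ → Finset ℕ) (i : ℕ) : Finset ℕ :=
  (τ i).filter (fun j => ∃ i₀, i₀ < m ∧ (τ i₀).card < a i₀ ∧
    (∀ t, t < i₀ → (τ t).card = a t) ∧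
    (i₀ < i ∨ (i₀ = i ∧ ∃ g, g < j ∧ g ∉ τ i ∧ g < n i)))


/-!
A block index `j` of `τ` lies in `R(τ)` exactly when some earlier block is not full or some
`g < j` of the same block is missing from `τ`. Moving `v = jv` to `w = j₀` keeps both witnesses
alive: a block made deficient by removing `v` lies after the deficient block of `w` (tail case),
and a gap created at `v` is preceded by the gap `w` (up case, or tail case inside one block).
Hence every element of `R(bk(τ,γ))` other than `w` already lies in `R(τ)`, and `v` is gone.
-/

/-- The block-`t` part of the restriction `R(σ)`. -/
def restrT (m : ℕ) (a n : ℕ → ℕ) (σ : ℕ → Finset ℕ) (t : ℕ) : Finset ℕ :=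
  upT a n σ t ∪ tailT m a n σ t

def swapT (τ : ℕ → Finset ℕ) (iv jv i₀ j₀ : ℕ) : ℕ → Finset ℕ :=
  fun t => (if t = i₀ then insert j₀ else id) (if t = iv then (τ t).erase jv else τ t)

theorem Finset.sum_card_le_of_subset_move {ι α : Type*} [DecidableEq ι] [DecidableEq α]
    {s : Finset ι} {S S' : ι → Finset α} {i k : ι} {x y : α} (hi : i ∈ s) (hk : k ∈ s)
    (hx : x ∈ S i)
    (h : ∀ t ∈ s, S' t ⊆ if t = i then (S t ∪ if t = k then {y} else ∅).erase x
      else S t ∪ if t = k then {y} else ∅) :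
    ∑ t ∈ s, (S' t).card ≤ ∑ t ∈ s, (S t).card := by
  have hbound : ∀ t ∈ s, (S' t).card + (if t = i then 1 else 0) ≤
      (S t).card + (if t = k then 1 else 0) := by
    intro t ht
    have hU : (S t ∪ if t = k then {y} else ∅).card ≤ (S t).card + (if t = k then 1 else 0) :=
      (Finset.card_union_le _ _).trans (by split_ifs <;> simp)
    have h' := Finset.card_le_card (h t ht)
    by_cases hti : t = i
    · subst hti
      have hxU : x ∈ S t ∪ if t = k then {y} else ∅ := Finset.mem_union_left _ hx
      rw [if_pos rfl, Finset.card_erase_of_mem hxU] at h'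
      have := Finset.card_pos.2 ⟨x, hxU⟩
      rw [if_pos rfl]
      omega
    · rw [if_neg hti] at h' ⊢
      omega
  have := Finset.sum_le_sum hbound
  simp only [Finset.sum_add_distrib, Finset.sum_ite_eq', if_pos hi, if_pos hk] at this
  omega

section Restriction

variable {m : ℕ} {a n : ℕ → ℕ} {σ : ℕ → Finset ℕ} {t j : ℕ}

theorem mem_upT :
    j ∈ upT a n σ t ↔ (σ t).card = a t ∧ j ∈ σ t ∧ ∃ g < j, g ∉ σ t ∧ g < n t := by
  unfold upT
  split_ifs with hfull <;> simp [hfull, and_comm]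

theorem mem_tailT_of_card_lt (ht : t < m) (hc : ∀ s ≤ t, (σ s).card ≤ a s) (hj : j ∈ σ t)
    {i : ℕ} (hi : i < t) (hdef : (σ i).card < a i) : j ∈ tailT m a n σ t := by
  have hex : ∃ i, (σ i).card < a i := ⟨i, hdef⟩
  have hfirst : Nat.find hex ≤ i := Nat.find_min' hex hdef
  refine Finset.mem_filter.2 ⟨hj, Nat.find hex, by omega, Nat.find_spec hex,
    fun s hs => ?_, Or.inl (by omega)⟩
  have := Nat.find_min hex hs
  have := hc s (by omega)
  omega

theorem lt_of_mem_upT {k : ℕ} (hj : j ∈ upT a n σ t) (hmin : ∀ g < k, g ∈ σ t) : k < j := by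
  obtain ⟨-, -, g, hgj, hg, -⟩ := mem_upT.1 hj
  exact lt_of_le_of_lt (not_lt.1 fun h => hg (hmin g h)) hgj

theorem lt_or_eq_and_lt_of_mem_tailT {i k : ℕ} (hj : j ∈ tailT m a n σ t)
    (hdef : (σ i).card < a i) (hfull : ∀ s < i, (σ s).card = a s) (hmin : ∀ g < k, g ∈ σ i) :
    i < t ∨ (i = t ∧ k < j) := by
  obtain ⟨-, i', -, hdef', hfull', hcase⟩ := Finset.mem_filter.1 hj
  -- `i` and `i'` are both the first deficient block
  have hi : i' = i := by
    by_contra hne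
    rcases Nat.lt_or_gt_of_ne hne with h | h
    · exact absurd (hfull i' h) hdef'.ne
    · exact absurd (hfull' i h) hdef.ne
  subst hi
  rcases hcase with h | ⟨rfl, g, hgj, hg, -⟩
  · exact Or.inl h
  · exact Or.inr ⟨rfl, lt_of_le_of_lt (not_lt.1 fun h => hg (hmin g h)) hgj⟩

theorem restrT_spec (hj : j ∈ restrT m a n σ t) :
    j ∈ σ t ∧ ((∃ i < t, (σ i).card < a i) ∨ ∃ g < j, g ∉ σ t ∧ g < n t) := by
  rcases Finset.mem_union.1 hj with hup | htail
  · obtain ⟨-, hjσ, hgap⟩ := mem_upT.1 hup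
    exact ⟨hjσ, Or.inr hgap⟩
  · obtain ⟨hjσ, i, -, hdef, -, hi | ⟨rfl, hgap⟩⟩ := Finset.mem_filter.1 htail
    · exact ⟨hjσ, Or.inl ⟨i, hi, hdef⟩⟩
    · exact ⟨hjσ, Or.inr hgap⟩

theorem mem_restrT_of_exists (ht : t < m) (hc : ∀ s ≤ t, (σ s).card ≤ a s) (hj : j ∈ σ t)
    (h : (∃ i < t, (σ i).card < a i) ∨ ∃ g < j, g ∉ σ t ∧ g < n t) :
    j ∈ restrT m a n σ t := by
  rcases h with ⟨i, hi, hdef⟩ | hgap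
  · exact Finset.mem_union_right _ (mem_tailT_of_card_lt ht hc hj hi hdef)
  by_cases hfull : (σ t).card = a t
  · exact Finset.mem_union_left _ (mem_upT.2 ⟨hfull, hj, hgap⟩)
  by_cases hbefore : ∃ i < t, (σ i).card < a i
  · obtain ⟨i, hi, hdef⟩ := hbefore
    exact Finset.mem_union_right _ (mem_tailT_of_card_lt ht hc hj hi hdef)
  push Not at hbefore
  refine Finset.mem_union_right _ (Finset.mem_filter.2 ⟨hj, t, ht,
    lt_of_le_of_ne (hc t le_rfl) hfull, fun s hs => ?_, Or.inr ⟨rfl, hgap⟩⟩)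
  exact le_antisymm (hc s hs.le) (hbefore s hs)

end Restriction

section Swap

variable {m : ℕ} {a n : ℕ → ℕ} {τ : ℕ → Finset ℕ} {iv jv i₀ j₀ : ℕ}

theorem mem_swapT {t j : ℕ} :
    j ∈ swapT τ iv jv i₀ j₀ t ↔ (t = i₀ ∧ j = j₀) ∨ (j ∈ τ t ∧ (t = iv → j ≠ jv)) := by
  unfold swapT
  split_ifs <;> simp_all [and_comm]

theorem exists_card_lt_of_card_swapT_lt
    (hshape : (i₀ < iv ∧ (τ i₀).card < a i₀) ∨ (i₀ = iv ∧ j₀ < jv))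
    (hjv : jv ∈ τ iv) (hj₀ : j₀ ∉ τ i₀) {i : ℕ}
    (h : (swapT τ iv jv i₀ j₀ i).card < a i) : ∃ i' ≤ i, (τ i').card < a i' := by
  by_cases hi₀ : i = i₀ <;> by_cases hiv : i = iv
  · subst hi₀ hiv
    refine ⟨i, le_rfl, ?_⟩
    simp only [swapT, if_true] at h
    rwa [Finset.card_insert_of_notMem (fun h' => hj₀ (Finset.mem_of_mem_erase h')),
      Finset.card_erase_of_mem hjv, Nat.sub_add_cancel (Finset.card_pos.2 ⟨jv, hjv⟩)] at h
  · subst hi₀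
    simp only [swapT, if_true, if_neg hiv] at h
    exact ⟨i, le_rfl, lt_of_le_of_lt (Finset.card_le_card (Finset.subset_insert _ _)) h⟩
  · subst hiv
    rcases hshape with ⟨hlt, hdef⟩ | ⟨rfl, -⟩
    · exact ⟨i₀, hlt.le, hdef⟩
    · exact absurd rfl hi₀
  · simp only [swapT, if_neg hi₀, if_neg hiv, id] at h
    exact ⟨i, le_rfl, h⟩

theorem gap_of_gap_swapT
    (hshape : (i₀ < iv ∧ (τ i₀).card < a i₀) ∨ (i₀ = iv ∧ j₀ < jv))
    (hj₀ : j₀ ∉ τ i₀) (hj₀n : j₀ < n i₀) {t j : ℕ}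
    (h : ∃ g < j, g ∉ swapT τ iv jv i₀ j₀ t ∧ g < n t) :
    (∃ i < t, (τ i).card < a i) ∨ ∃ g < j, g ∉ τ t ∧ g < n t := by
  obtain ⟨g, hgj, hg, hgn⟩ := h
  by_cases hgτ : g ∈ τ t
  · have hgv : t = iv ∧ g = jv := by
      by_contra hne
      exact hg (mem_swapT.2 (Or.inr ⟨hgτ, fun htv hgv => hne ⟨htv, hgv⟩⟩))
    obtain ⟨rfl, rfl⟩ := hgv
    rcases hshape with ⟨hlt, hdef⟩ | ⟨rfl, hlt⟩
    · exact Or.inl ⟨i₀, hlt, hdef⟩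
    · exact Or.inr ⟨j₀, hlt.trans hgj, hj₀, hj₀n⟩
  · exact Or.inr ⟨g, hgj, hgτ, hgn⟩

theorem mem_restrT_swapT
    (hshape : (i₀ < iv ∧ (τ i₀).card < a i₀) ∨ (i₀ = iv ∧ j₀ < jv))
    (hjv : jv ∈ τ iv) (hj₀ : j₀ ∉ τ i₀) (hj₀n : j₀ < n i₀) {t j : ℕ}
    (ht : t < m) (hc : ∀ s ≤ t, (τ s).card ≤ a s)
    (hj : j ∈ restrT m a n (swapT τ iv jv i₀ j₀) t) :
    (t = iv → j ≠ jv) ∧ (j ∈ restrT m a n τ t ∨ (t = i₀ ∧ j = j₀)) := by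
  obtain ⟨hjτ', hwit⟩ := restrT_spec hj
  rcases mem_swapT.1 hjτ' with ⟨rfl, rfl⟩ | ⟨hjτ, hjv'⟩
  · refine ⟨fun htv => ?_, Or.inr ⟨rfl, rfl⟩⟩
    rcases hshape with ⟨hlt, -⟩ | ⟨-, hlt⟩
    · exact absurd htv hlt.ne
    · exact hlt.ne
  refine ⟨hjv', Or.inl (mem_restrT_of_exists ht hc hjτ ?_)⟩
  rcases hwit with ⟨i, hi, hdef⟩ | hgap
  · obtain ⟨i', hi', hdef'⟩ := exists_card_lt_of_card_swapT_lt hshape hjv hj₀ hdef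
    exact Or.inl ⟨i', lt_of_le_of_lt hi' hi, hdef'⟩
  · exact gap_of_gap_swapT hshape hj₀ hj₀n hgap

end Swap

/-- `v` is the element `jv` of block `iv`; `w` is the element `j₀` of block `i₀`, namely `Gap(τ)`
in the tail case and `fgap(τ, iv)` in the up case. -/
theorem stmt13_general (m d : ℕ) (n a : ℕ → ℕ)
    (τ : ℕ → Finset ℕ) (hτ : IsFacetT m d n a τ)
    (iv jv i₀ j₀ : ℕ) (hiv : iv < m)
    (hswap :
      (jv ∈ tailT m a n τ iv ∧ i₀ < m ∧ (τ i₀).card < a i₀ ∧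
        (∀ t, t < i₀ → (τ t).card = a t) ∧ j₀ < n i₀ ∧ j₀ ∉ τ i₀ ∧
        (∀ g, g < j₀ → g ∈ τ i₀)) ∨
      (jv ∈ upT a n τ iv ∧ i₀ = iv ∧ j₀ < n iv ∧ j₀ ∉ τ iv ∧ (∀ g, g < j₀ → g ∈ τ iv)))
    (τ' : ℕ → Finset ℕ)
    (hτ' : τ' = fun t => (if t = i₀ then insert j₀ else id)
        (if t = iv then (τ t).erase jv else τ t)) :
    (∀ t, t < m →
      upT a n τ' t ∪ tailT m a n τ' t ⊆
        (if t = iv then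
          (upT a n τ t ∪ tailT m a n τ t ∪ (if t = i₀ then {j₀} else ∅)).erase jv
        else upT a n τ t ∪ tailT m a n τ t ∪ (if t = i₀ then {j₀} else ∅))) ∧
    (∑ t ∈ Finset.range m, (upT a n τ' t ∪ tailT m a n τ' t).card
      ≤ ∑ t ∈ Finset.range m, (upT a n τ t ∪ tailT m a n τ t).card) := by
  obtain ⟨hjvR, hi₀m, hj₀, hj₀n, hshape⟩ : jv ∈ restrT m a n τ iv ∧ i₀ < m ∧ j₀ ∉ τ i₀ ∧
      j₀ < n i₀ ∧ ((i₀ < iv ∧ (τ i₀).card < a i₀) ∨ (i₀ = iv ∧ j₀ < jv)) := by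
    rcases hswap with ⟨htail, hi₀m, hdef₀, hfull₀, hj₀n, hj₀, hmin⟩ | ⟨hup, rfl, hj₀n, hj₀, hmin⟩
    · refine ⟨Finset.mem_union_right _ htail, hi₀m, hj₀, hj₀n, ?_⟩
      rcases lt_or_eq_and_lt_of_mem_tailT htail hdef₀ hfull₀ hmin with h | ⟨rfl, h⟩
      exacts [Or.inl ⟨h, hdef₀⟩, Or.inr ⟨rfl, h⟩]
    · exact ⟨Finset.mem_union_left _ hup, hiv, hj₀, hj₀n, Or.inr ⟨rfl, lt_of_mem_upT hup hmin⟩⟩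
  have hsub : ∀ t, t < m → restrT m a n τ' t ⊆ if t = iv then
      (restrT m a n τ t ∪ if t = i₀ then {j₀} else ∅).erase jv
      else restrT m a n τ t ∪ if t = i₀ then {j₀} else ∅ := by
    intro t ht j hj
    subst hτ'
    have := mem_restrT_swapT hshape (restrT_spec hjvR).1 hj₀ hj₀n ht
      (fun s hs => hτ.2.1 s (lt_of_le_of_lt hs ht)) hj
    split_ifs <;>
      simp only [Finset.mem_erase, Finset.mem_union, Finset.mem_singleton,
        Finset.notMem_empty] <;> tauto
  exact ⟨hsub, Finset.sum_card_le_of_subset_move (Finset.mem_range.2 hiv)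
    (Finset.mem_range.2 hi₀m) hjvR fun t ht => hsub t (Finset.mem_range.1 ht)⟩

/-- For the swap facet `bk(τ,γ) = (τ - v) ∪ w` (where `v ∈ R(τ)` lies in block `iv` with
index `jv`, and `w` is `Gap(τ)` resp. `fgap(τ,iv)`, in block `i₀` with index `j₀`), the
restriction satisfies `R(bk(τ,γ)) ⊆ (R(τ) ∪ {w}) - {v}`; in particular
`|R(bk(τ,γ))| ≤ |R(τ)|`. -/
theorem stmt13 (m d : ℕ) (n a : ℕ → ℕ)
    (hd1 : 1 ≤ d) (hd2 : d ≤ ∑ i ∈ Finset.range m, a i)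
    (ha : ∀ i, i < m → 0 < a i ∧ a i ≤ n i)
    (τ : ℕ → Finset ℕ) (hτ : IsFacetT m d n a τ)
    (iv jv i₀ j₀ : ℕ) (hiv : iv < m)
    (hswap :
      (jv ∈ tailT m a n τ iv ∧ i₀ < m ∧ (τ i₀).card < a i₀ ∧
        (∀ t, t < i₀ → (τ t).card = a t) ∧ j₀ < n i₀ ∧ j₀ ∉ τ i₀ ∧
        (∀ g, g < j₀ → g ∈ τ i₀)) ∨
      (jv ∈ upT a n τ iv ∧ i₀ = iv ∧ j₀ < n iv ∧ j₀ ∉ τ iv ∧ (∀ g, g < j₀ → g ∈ τ iv)))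
    (τ' : ℕ → Finset ℕ)
    (hτ' : τ' = fun t => (if t = i₀ then insert j₀ else id)
        (if t = iv then (τ t).erase jv else τ t)) :
    (∀ t, t < m →
      upT a n τ' t ∪ tailT m a n τ' t ⊆
        (if t = iv then
          (upT a n τ t ∪ tailT m a n τ t ∪ (if t = i₀ then {j₀} else ∅)).erase jv
        else upT a n τ t ∪ tailT m a n τ t ∪ (if t = i₀ then {j₀} else ∅))) ∧
    (∑ t ∈ Finset.range m, (upT a n τ' t ∪ tailT m a n τ' t).card
      ≤ ∑ t ∈ Finset.range m, (upT a n τ t ∪ tailT m a n τ t).card) :=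
  stmt13_general m d n a τ hτ iv jv i₀ j₀ hiv hswap τ' hτ'
end

section
/- Suppose a (0)-compressed multicomplex M ⊆ S_d(X,(∞,a)) is given, and let Γ be the simplicial complex generated by the facets Φ^{-1}(M) of Λ_d. Then Γ is shellable (the revlex order on its facets is a shelling whose restriction function is the restriction of that of Λ_d), and h(Γ) = F(M). -/
open Finset

variable {V : Type*} [Fintype V] [LinearOrder V]
variable {W : Type*} [Fintype W] [LinearOrder W]

/-- Facets of `Λ_d`: colors of vertices lie in `{1,…,m}`, and a facet is a `d`-set meeting
the `i`-th color class in at most `a i` vertices.  The listing order `≻` is `>`. -/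
def IsFacetF (c : V → ℕ) (a : ℕ → ℕ) (m d : ℕ) (τ : Finset V) : Prop :=
  τ.card = d ∧ ∀ i ∈ Finset.Icc 1 m, (τ.filter (fun v => c v = i)).card ≤ a i

/-- Revlex order on equal-size subsets. -/
def RevGT (S T : Finset V) : Prop :=
  ∃ v ∈ T, v ∉ S ∧ ∀ w, w < v → (w ∈ S ↔ w ∈ T)

open Classical in
/-- The restriction function of the revlex shelling of `Λ_d`. -/
noncomputable def Rres (c : V → ℕ) (a : ℕ → ℕ) (m d : ℕ) (τ : Finset V) : Finset V :=
  τ.filter (fun v => ∃ τ', IsFacetF c a m d τ' ∧ RevGT τ' τ ∧ τ.erase v ⊆ τ')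

def degM (μ : W →₀ ℕ) : ℕ := ∑ x, μ x

def degC (cx : W → ℕ) (i : ℕ) (μ : W →₀ ℕ) : ℕ :=
  ∑ x ∈ Finset.univ.filter (fun x => cx x = i), μ x

/-- Membership in `S_d(X,(∞,a))` (variable colors in `{0,…,m}`; color `0` is `X₀`). -/
def InS (cx : W → ℕ) (a : ℕ → ℕ) (m d : ℕ) (μ : W →₀ ℕ) : Prop :=
  degM μ ≤ d ∧ ∀ i, 1 ≤ i → i ≤ m → degC cx i μ ≤ a i

def MonRevGTOn (P : W → Prop) (μ ν : W →₀ ℕ) : Prop :=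
  ∃ x, P x ∧ μ x < ν x ∧ ∀ y, P y → y < x → μ y = ν y

def DivClosed (M : Finset (W →₀ ℕ)) : Prop :=
  ∀ μ ∈ M, ∀ ν : W →₀ ℕ, (∀ x, ν x ≤ μ x) → ν ∈ M

def Compressed0i (cx : W → ℕ) (a : ℕ → ℕ) (m d i : ℕ) (M : Finset (W →₀ ℕ)) : Prop :=
  ∀ μ ∈ M, ∀ μ' : W →₀ ℕ, InS cx a m d μ' → degM μ' = degM μ →
    (∀ x, cx x ≠ 0 → cx x ≠ i → μ' x = μ x) →
    MonRevGTOn (fun x => cx x = 0 ∨ cx x = i) μ' μ → μ' ∈ M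

/-!
Listing the facets of `Γ = ⟨Φ⁻¹(M)⟩` in revlex order: if `R(τ) ⊄ γ`, the swap property yields an
earlier facet `τ' ⊇ γ` whose monomial is a `(0)`-compression of a divisor of `Φ(τ) ∈ M`, so it
lies in `M`. Conversely, an earlier facet of `Λ_d` containing `γ` can be moved towards `τ` one
vertex at a time, keeping the first vertex `v` at which it differs from `τ`, until it contains
`τ ∖ {v}`; then `v ∈ R(τ) ∖ γ`. A shelling partitions the faces into the intervals `[R(τ), τ]`,
and summing `(X - 1)^(d - |σ|)` over such an interval gives `X^(d - |R(τ)|) = X^(d - deg Φ(τ))`.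
-/

theorem sum_range_card_filter_mul {ι S : Type*} [Semiring S] (s : Finset ι) (f : ι → ℕ) {d : ℕ}
    (hf : ∀ x ∈ s, f x ≤ d) (p : ℕ → S) :
    ∑ i ∈ range (d + 1), (#{x ∈ s | f x = i} : S) * p i = ∑ x ∈ s, p (f x) := by
  rw [← sum_fiberwise_of_maps_to fun x hx => mem_range.2 (Nat.lt_succ_of_le (hf x hx))]
  refine sum_congr rfl fun i _ => ?_
  rw [← nsmul_eq_mul, ← sum_const]
  exact sum_congr rfl fun x hx => by rw [(mem_filter.1 hx).2]

theorem sum_Icc_pow_card_sub {α A : Type*} [DecidableEq α] [CommSemiring A] {s t : Finset α}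
    (h : s ⊆ t) (y : A) : ∑ u ∈ Icc s t, y ^ (#t - #u) = (1 + y) ^ (#t - #s) := by
  have hdisj : ∀ u ∈ (t \ s).powerset, Disjoint s u := fun u hu =>
    disjoint_sdiff.mono_right (mem_powerset.1 hu)
  rw [Icc_eq_image_powerset h, sum_image fun u hu v hv huv => by
      rw [← union_sdiff_cancel_left (hdisj u hu), huv, union_sdiff_cancel_left (hdisj v hv)],
    ← card_sdiff_of_subset h, ← sum_pow_mul_eq_add_pow]
  refine sum_congr rfl fun u hu => ?_
  rw [one_pow, one_mul, card_union_of_disjoint (hdisj u hu), card_sdiff_of_subset h, Nat.sub_add_eq]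

section RevlexShelling

variable {α : Type*} [LinearOrder α]

/-- Revlex is colex for the reversed order on vertices. -/
def revlexKey (S : Finset α) : Colex (Finset αᵒᵈ) :=
  toColex (S.map OrderDual.toDual.toEmbedding)

theorem RevGT.revlexKey_lt {S T : Finset α} (h : RevGT S T) : revlexKey S < revlexKey T := by
  obtain ⟨v, hvT, hvS, hb⟩ := h
  rw [revlexKey, revlexKey, Colex.toColex_lt_toColex_iff_exists_forall_lt]
  refine ⟨OrderDual.toDual v, by simpa using hvT, by simpa using hvS, fun x hxS hxT => ?_⟩
  simp only [mem_map_equiv] at hxS hxT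
  rcases lt_trichotomy (OrderDual.ofDual x) v with h | h | h
  · exact absurd ((hb _ h).1 hxS) hxT
  · exact absurd (h ▸ hxS) hvS
  · exact h

theorem revGT_or_revGT_of_ne {S T : Finset α} (h : S ≠ T) : RevGT S T ∨ RevGT T S := by
  have hne : (symmDiff S T).Nonempty := symmDiff_nonempty.2 h
  have hbelow : ∀ w < (symmDiff S T).min' hne, (w ∈ S ↔ w ∈ T) := fun w hw => by
    by_contra hST
    exact hw.not_ge (min'_le _ w (by rw [mem_symmDiff]; tauto))
  rcases mem_symmDiff.1 (min'_mem _ hne) with ⟨hS, hT⟩ | ⟨hT, hS⟩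
  · exact Or.inr ⟨_, hS, hT, fun w hw => (hbelow w hw).symm⟩
  · exact Or.inl ⟨_, hT, hS, hbelow⟩

/-- `R` is the restriction function of the shelling of `⟨F⟩` by the revlex order on `F`. -/
def IsRevlexShelling (F : Finset (Finset α)) (R : Finset α → Finset α) : Prop :=
  ∀ τ ∈ F, ∀ γ ⊆ τ, (R τ ⊆ γ ↔ ∀ τ' ∈ F, RevGT τ' τ → ¬ γ ⊆ τ')

variable {F : Finset (Finset α)} {R : Finset α → Finset α}

theorem IsRevlexShelling.pairwiseDisjoint_Icc (hF : IsRevlexShelling F R) :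
    (F : Set (Finset α)).PairwiseDisjoint fun τ => Icc (R τ) τ := by
  intro τ₁ hτ₁ τ₂ hτ₂ hne
  rw [Function.onFun, disjoint_left]
  intro σ h₁ h₂
  rw [mem_Icc] at h₁ h₂
  rcases revGT_or_revGT_of_ne hne with h | h
  · exact (hF τ₂ hτ₂ σ h₂.2).1 h₂.1 τ₁ hτ₁ h h₁.2
  · exact (hF τ₁ hτ₁ σ h₁.2).1 h₁.1 τ₂ hτ₂ h h₂.2

theorem IsRevlexShelling.biUnion_Icc_eq (hF : IsRevlexShelling F R) :
    F.biUnion (fun τ => Icc (R τ) τ) = F.biUnion powerset := by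
  ext σ
  simp only [mem_biUnion, mem_Icc, mem_powerset]
  constructor
  · rintro ⟨τ, hτ, -, hστ⟩
    exact ⟨τ, hτ, hστ⟩
  · rintro ⟨τ, hτ, hστ⟩
    obtain ⟨τ₀, hτ₀, hmin⟩ :=
      exists_min_image {τ ∈ F | σ ⊆ τ} revlexKey ⟨τ, mem_filter.2 ⟨hτ, hστ⟩⟩
    rw [mem_filter] at hτ₀
    refine ⟨τ₀, hτ₀.1, (hF τ₀ hτ₀.1 σ hτ₀.2).2 fun τ' hτ' hrev hστ' => ?_, hτ₀.2⟩
    exact (hmin τ' (mem_filter.2 ⟨hτ', hστ'⟩)).not_gt hrev.revlexKey_lt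

theorem IsRevlexShelling.sum_biUnion_powerset_pow {A : Type*} [CommSemiring A] {d : ℕ}
    (hF : IsRevlexShelling F R) (hR : ∀ τ ∈ F, R τ ⊆ τ) (hcard : ∀ τ ∈ F, #τ = d) (y : A) :
    ∑ σ ∈ F.biUnion powerset, y ^ (d - #σ) = ∑ τ ∈ F, (1 + y) ^ (d - #(R τ)) := by
  rw [← hF.biUnion_Icc_eq, sum_biUnion hF.pairwiseDisjoint_Icc]
  refine sum_congr rfl fun τ hτ => ?_
  rw [← hcard τ hτ]
  exact sum_Icc_pow_card_sub (hR τ hτ) y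

end RevlexShelling

section Facets

variable {α : Type*} [DecidableEq α] {c : α → ℕ} {a : ℕ → ℕ} {m d : ℕ} {τ τ' : Finset α} {u w : α}

theorem IsFacetF.insert_erase (hτ : IsFacetF c a m d τ) (hu : u ∉ τ) (hw : w ∈ τ)
    (hroom : c w = c u ∨ c u ∉ Icc 1 m ∨ #{x ∈ τ | c x = c u} < a (c u)) :
    IsFacetF c a m d (insert u (τ.erase w)) := by
  refine ⟨?_, fun j hj => ?_⟩
  · rw [card_insert_of_notMem (fun h => hu (mem_of_mem_erase h)), card_erase_add_one hw, hτ.1]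
  · rw [filter_insert, filter_erase]
    split_ifs with hj'
    · subst hj'
      have hins := card_insert_le u ({x ∈ τ | c x = c u}.erase w)
      rcases hroom with hwu | hj' | hlt
      · rw [card_erase_add_one (mem_filter.2 ⟨hw, hwu⟩)] at hins
        exact hins.trans (hτ.2 _ hj)
      · exact absurd hj hj'
      · exact hins.trans (Nat.add_one_le_of_lt (card_erase_le.trans_lt hlt))
    · exact card_erase_le.trans (hτ.2 j hj)

theorem IsFacetF.exists_insert_erase (hτ : IsFacetF c a m d τ) (hτ' : IsFacetF c a m d τ')
    (hu : u ∈ τ) (hu' : u ∉ τ') : ∃ w ∈ τ', w ∉ τ ∧ IsFacetF c a m d (insert u (τ'.erase w)) := by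
  by_cases hfull : c u ∈ Icc 1 m ∧ a (c u) ≤ #{x ∈ τ' | c x = c u}
  · obtain ⟨w, hw, hwτ⟩ : ∃ w ∈ {x ∈ τ' | c x = c u}, w ∉ τ := by
      by_contra! h
      have hsub : {x ∈ τ' | c x = c u} ⊂ {x ∈ τ | c x = c u} :=
        (ssubset_iff_of_subset fun x hx => mem_filter.2 ⟨h x hx, (mem_filter.1 hx).2⟩).2
          ⟨u, mem_filter.2 ⟨hu, rfl⟩, fun hx => hu' (mem_filter.1 hx).1⟩
      exact (card_lt_card hsub).not_ge (hfull.2.trans' (hτ.2 _ hfull.1))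
    rw [mem_filter] at hw
    exact ⟨w, hw.1, hwτ, hτ'.insert_erase hu' hw.1 (Or.inl hw.2)⟩
  · obtain ⟨w, hw⟩ : (τ' \ τ).Nonempty := by
      rw [← card_pos, card_sdiff_comm (hτ'.1.trans hτ.1.symm), card_pos]
      exact ⟨u, mem_sdiff.2 ⟨hu, hu'⟩⟩
    rw [mem_sdiff] at hw
    rw [not_and_or, not_le] at hfull
    exact ⟨w, hw.1, hw.2, hτ'.insert_erase hu' hw.1 (Or.inr hfull)⟩

end Facets

section Restriction

variable {c : V → ℕ} {a : ℕ → ℕ} {m d : ℕ} {τ τ' : Finset V} {u : V}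

theorem mem_rres : u ∈ Rres c a m d τ ↔
    u ∈ τ ∧ ∃ τ', IsFacetF c a m d τ' ∧ RevGT τ' τ ∧ τ.erase u ⊆ τ' := by
  simp only [Rres, mem_filter]

theorem rres_subset : Rres c a m d τ ⊆ τ := fun _ hu => (mem_rres.1 hu).1

theorem exists_mem_rres_notMem_of_revGT (hτ : IsFacetF c a m d τ) (hτ' : IsFacetF c a m d τ')
    (hrev : RevGT τ' τ) : ∃ v ∈ Rres c a m d τ, v ∉ τ' := by
  induction hn : #(τ \ τ') using Nat.strong_induction_on generalizing τ' with
  | _ n ih =>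
  obtain ⟨v, hvτ, hvτ', hb⟩ := hrev
  by_cases hsub : τ.erase v ⊆ τ'
  · exact ⟨v, mem_rres.2 ⟨hvτ, τ', hτ', ⟨v, hvτ, hvτ', hb⟩, hsub⟩, hvτ'⟩
  obtain ⟨u, hu, hu'⟩ := not_subset.1 hsub
  obtain ⟨huv, huτ⟩ := mem_erase.1 hu
  obtain ⟨w, hwτ', hwτ, hτ''⟩ := hτ.exists_insert_erase hτ' huτ hu'
  -- `u` and `w` both lie above `v`, so `v` stays the first difference
  have hrev'' : RevGT (insert u (τ'.erase w)) τ := by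
    refine ⟨v, hvτ, by simp [Ne.symm huv, hvτ'], fun x hx => ?_⟩
    have hxu : x ≠ u := fun h => hu' ((hb u (h ▸ hx)).2 huτ)
    rw [mem_insert, mem_erase, ← hb x hx]
    exact ⟨fun h => (h.resolve_left hxu).2,
      fun h => Or.inr ⟨fun hxw => hwτ (hxw ▸ (hb x hx).1 h), h⟩⟩
  have hlt : #(τ \ insert u (τ'.erase w)) < n := by
    refine hn ▸ card_lt_card ((ssubset_iff_of_subset fun x hx => ?_).2 ⟨u, ?_, ?_⟩)
    · rw [mem_sdiff] at hx ⊢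
      exact ⟨hx.1, fun h => hx.2 (mem_insert_of_mem (mem_erase.2 ⟨fun hxw => hwτ (hxw ▸ hx.1), h⟩))⟩
    · exact mem_sdiff.2 ⟨huτ, hu'⟩
    · simp
  obtain ⟨v', hv', hv'τ''⟩ := ih _ hlt hτ'' hrev'' rfl
  refine ⟨v', hv', fun h => hv'τ'' (mem_insert_of_mem (mem_erase.2 ⟨?_, h⟩))⟩
  rintro rfl
  exact hwτ (rres_subset hv')

end Restriction

open Classical in
theorem isRevlexShelling_facets_preimage {c : V → ℕ} {cx : W → ℕ} {a : ℕ → ℕ} {m d : ℕ}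
    {Φ : Finset V → (W →₀ ℕ)} {M : Finset (W →₀ ℕ)}
    (hΦS : ∀ τ, IsFacetF c a m d τ → InS cx a m d (Φ τ))
    (hΦswap : ∀ τ, IsFacetF c a m d τ → ∀ γ ⊆ τ, ¬ Rres c a m d τ ⊆ γ →
      ∃ (τ' : Finset V) (i : ℕ) (μ'' : W →₀ ℕ), 1 ≤ i ∧ i ≤ m ∧
        IsFacetF c a m d τ' ∧ γ ⊆ τ' ∧ RevGT τ' τ ∧
        (∀ x, μ'' x ≤ Φ τ x) ∧ degM (Φ τ') = degM μ'' ∧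
        (∀ x, cx x ≠ 0 → cx x ≠ i → Φ τ' x = μ'' x) ∧
        (Φ τ' = μ'' ∨ MonRevGTOn (fun x => cx x = 0 ∨ cx x = i) (Φ τ') μ''))
    (hMdc : DivClosed M) (hMcomp : ∀ i, 1 ≤ i → i ≤ m → Compressed0i cx a m d i M) :
    IsRevlexShelling {τ | IsFacetF c a m d τ ∧ Φ τ ∈ M} (Rres c a m d) := by
  intro τ hτ γ hγ
  simp only [mem_filter, mem_univ, true_and] at hτ ⊢
  refine ⟨fun hR τ' hτ' hrev hγτ' => ?_, fun hearlier => ?_⟩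
  · obtain ⟨v, hv, hvτ'⟩ := exists_mem_rres_notMem_of_revGT hτ.1 hτ'.1 hrev
    exact hvτ' (hγτ' (hR hv))
  · by_contra hR
    obtain ⟨τ', i, μ'', hi1, him, hτ', hγτ', hrev, hdvd, hdeg, hagree, hswap⟩ :=
      hΦswap τ hτ.1 γ hγ hR
    have hμ'' : μ'' ∈ M := hMdc _ hτ.2 μ'' hdvd
    have hτ'M : Φ τ' ∈ M := by
      rcases hswap with heq | hgt
      · exact heq ▸ hμ''
      · exact hMcomp i hi1 him μ'' hμ'' (Φ τ') (hΦS τ' hτ') hdeg hagree hgt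
    exact hearlier τ' ⟨hτ', hτ'M⟩ hrev hγτ'

open Classical Polynomial in
theorem stmt15_general (c : V → ℕ) (cx : W → ℕ) (a : ℕ → ℕ) (m d : ℕ)
    (Φ : Finset V → (W →₀ ℕ))
    -- `Φ` is a bijection from the facets of `Λ_d` onto `S_d(X,(∞,a))`
    (hΦS : ∀ τ, IsFacetF c a m d τ → InS cx a m d (Φ τ))
    (hΦinj : ∀ τ τ', IsFacetF c a m d τ → IsFacetF c a m d τ' → Φ τ = Φ τ' → τ = τ')
    (hΦsurj : ∀ μ : W →₀ ℕ, InS cx a m d μ → ∃ τ, IsFacetF c a m d τ ∧ Φ τ = μ)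
    -- `deg Φ(τ) = |R(τ)|`
    (hΦdeg : ∀ τ, IsFacetF c a m d τ → degM (Φ τ) = (Rres c a m d τ).card)
    -- the swap property of Theorem `bijection`
    (hΦswap : ∀ τ, IsFacetF c a m d τ → ∀ γ ⊆ τ, ¬ Rres c a m d τ ⊆ γ →
      ∃ (τ' : Finset V) (i : ℕ) (μ'' : W →₀ ℕ), 1 ≤ i ∧ i ≤ m ∧
        IsFacetF c a m d τ' ∧ γ ⊆ τ' ∧ RevGT τ' τ ∧
        (∀ x, μ'' x ≤ Φ τ x) ∧ degM (Φ τ') = degM μ'' ∧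
        (∀ x, cx x ≠ 0 → cx x ≠ i → Φ τ' x = μ'' x) ∧
        (Φ τ' = μ'' ∨ MonRevGTOn (fun x => cx x = 0 ∨ cx x = i) (Φ τ') μ''))
    (M : Finset (W →₀ ℕ)) (hMS : ∀ μ ∈ M, InS cx a m d μ) (hMdc : DivClosed M)
    (hMcomp : ∀ i, 1 ≤ i → i ≤ m → Compressed0i cx a m d i M) :
    -- revlex is a shelling of `Γ` with restriction function `Rres`
    (∀ τ, IsFacetF c a m d τ → Φ τ ∈ M → ∀ γ ⊆ τ,
      (Rres c a m d τ ⊆ γ ↔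
        ∀ τ', IsFacetF c a m d τ' → Φ τ' ∈ M → RevGT τ' τ → ¬ γ ⊆ τ')) ∧
    -- `h(Γ) = F(M)`
    (∑ i ∈ Finset.range (d + 1),
        (C ((((Finset.univ : Finset (Finset V)).filter
            (fun σ => ∃ τ, IsFacetF c a m d τ ∧ Φ τ ∈ M ∧ σ ⊆ τ)).filter
              (fun σ => σ.card = i)).card : ℤ)) * (X - 1) ^ (d - i)
      = ∑ i ∈ Finset.range (d + 1),
        (C (((M.filter (fun μ => degM μ = i)).card : ℤ))) * X ^ (d - i)) := by
  set F : Finset (Finset V) := {τ | IsFacetF c a m d τ ∧ Φ τ ∈ M}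
  have hshell : IsRevlexShelling F (Rres c a m d) :=
    isRevlexShelling_facets_preimage hΦS hΦswap hMdc hMcomp
  refine ⟨fun τ hτ hτM γ hγ => by simpa [F] using hshell τ (by simp [F, hτ, hτM]) γ hγ, ?_⟩
  have hfaces : ({σ | ∃ τ, IsFacetF c a m d τ ∧ Φ τ ∈ M ∧ σ ⊆ τ} : Finset (Finset V)) =
      F.biUnion powerset := by
    ext σ
    simp [F, and_assoc]
  have hcard : ∀ τ ∈ F, #τ = d := fun τ hτ => (mem_filter.1 hτ).2.1.1
  have hfaces_le : ∀ σ ∈ F.biUnion powerset, #σ ≤ d := fun σ hσ => by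
    obtain ⟨τ, hτ, hστ⟩ := mem_biUnion.1 hσ
    exact hcard τ hτ ▸ card_le_card (mem_powerset.1 hστ)
  have hΦsum : ∑ τ ∈ F, (X : ℤ[X]) ^ (d - #(Rres c a m d τ)) = ∑ μ ∈ M, X ^ (d - degM μ) :=
    sum_nbij Φ (fun τ hτ => (mem_filter.1 hτ).2.2)
      (fun τ hτ τ' hτ' => hΦinj τ τ' (mem_filter.1 hτ).2.1 (mem_filter.1 hτ').2.1)
      (fun μ hμ => by
        obtain ⟨τ, hτ, rfl⟩ := hΦsurj μ (hMS μ hμ)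
        exact ⟨τ, mem_filter.2 ⟨mem_univ τ, hτ, hμ⟩, rfl⟩)
      (fun τ hτ => by rw [hΦdeg τ (mem_filter.1 hτ).2.1])
  simp only [map_natCast]
  rw [hfaces, sum_range_card_filter_mul _ _ hfaces_le fun i => ((X : ℤ[X]) - 1) ^ (d - i),
    sum_range_card_filter_mul _ _ (fun μ hμ => (hMS μ hμ).1) fun i => (X : ℤ[X]) ^ (d - i),
    hshell.sum_biUnion_powerset_pow (fun τ _ => rres_subset) hcard, add_sub_cancel, hΦsum]

open Classical Polynomial in
/-- Corollary `4 → 2`: if `M ⊆ S_d(X,(∞,a))` is a `(0)`-compressed multicomplex and `Γ` is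
the complex generated by the facets `Φ⁻¹(M)` of `Λ_d`, then the revlex order on the facets
of `Γ` is a shelling whose restriction function is the restriction of that of `Λ_d`, and
`h(Γ) = F(M)` (encoded by the defining polynomial identity for the h-vector). -/
theorem stmt15 (c : V → ℕ) (cx : W → ℕ) (a : ℕ → ℕ) (m d : ℕ)
    (hm : 1 ≤ m) (hd1 : 1 ≤ d) (hd2 : d ≤ ∑ i ∈ Finset.Icc 1 m, a i)
    (hc : ∀ v, 1 ≤ c v ∧ c v ≤ m) (horderV : ∀ v w : V, c v < c w → w < v)
    (ha : ∀ i ∈ Finset.Icc 1 m, 0 < a i ∧ a i ≤ (Finset.univ.filter (fun v : V => c v = i)).card)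
    (hcx : ∀ x : W, cx x ≤ m) (horderW : ∀ x y : W, cx x < cx y → y < x)
    (Φ : Finset V → (W →₀ ℕ))
    -- `Φ` is a bijection from the facets of `Λ_d` onto `S_d(X,(∞,a))`
    (hΦS : ∀ τ, IsFacetF c a m d τ → InS cx a m d (Φ τ))
    (hΦinj : ∀ τ τ', IsFacetF c a m d τ → IsFacetF c a m d τ' → Φ τ = Φ τ' → τ = τ')
    (hΦsurj : ∀ μ : W →₀ ℕ, InS cx a m d μ → ∃ τ, IsFacetF c a m d τ ∧ Φ τ = μ)
    -- `deg Φ(τ) = |R(τ)|`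
    (hΦdeg : ∀ τ, IsFacetF c a m d τ → degM (Φ τ) = (Rres c a m d τ).card)
    -- the swap property of Theorem `bijection`
    (hΦswap : ∀ τ, IsFacetF c a m d τ → ∀ γ ⊆ τ, ¬ Rres c a m d τ ⊆ γ →
      ∃ (τ' : Finset V) (i : ℕ) (μ'' : W →₀ ℕ), 1 ≤ i ∧ i ≤ m ∧
        IsFacetF c a m d τ' ∧ γ ⊆ τ' ∧ RevGT τ' τ ∧
        (∀ x, μ'' x ≤ Φ τ x) ∧ degM (Φ τ') = degM μ'' ∧
        (∀ x, cx x ≠ 0 → cx x ≠ i → Φ τ' x = μ'' x) ∧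
        (Φ τ' = μ'' ∨ MonRevGTOn (fun x => cx x = 0 ∨ cx x = i) (Φ τ') μ''))
    (M : Finset (W →₀ ℕ)) (hMS : ∀ μ ∈ M, InS cx a m d μ) (hMdc : DivClosed M)
    (hMcomp : ∀ i, 1 ≤ i → i ≤ m → Compressed0i cx a m d i M) :
    -- revlex is a shelling of `Γ` with restriction function `Rres`
    (∀ τ, IsFacetF c a m d τ → Φ τ ∈ M → ∀ γ ⊆ τ,
      (Rres c a m d τ ⊆ γ ↔
        ∀ τ', IsFacetF c a m d τ' → Φ τ' ∈ M → RevGT τ' τ → ¬ γ ⊆ τ')) ∧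
    -- `h(Γ) = F(M)`
    (∑ i ∈ Finset.range (d + 1),
        (C ((((Finset.univ : Finset (Finset V)).filter
            (fun σ => ∃ τ, IsFacetF c a m d τ ∧ Φ τ ∈ M ∧ σ ⊆ τ)).filter
              (fun σ => σ.card = i)).card : ℤ)) * (X - 1) ^ (d - i)
      = ∑ i ∈ Finset.range (d + 1),
        (C (((M.filter (fun μ => degM μ = i)).card : ℤ))) * X ^ (d - i)) :=
  stmt15_general c cx a m d Φ hΦS hΦinj hΦsurj hΦdeg hΦswap M hMS hMdc hMcomp
end

section
/- If Δ is a pure (d−1)-dimensional simplicial complex all of whose facets are facets of Λ_d, and the h-vector of Λ_d equals the F-vector of a sub-multicomplex of S_d(X,(∞,a)), then the number of facets of Δ is at most |S_d(X,(∞,a))|; in particular, since Φ: fac(Λ_d) → S_d(X,(∞,a)) and Ψ: S_d(X,(∞,a)) → fac(Λ_d) satisfy Φ∘Ψ = id, both Φ and Ψ are bijections. -/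
open Finset

variable {V : Type*} [Fintype V] [LinearOrder V]
variable {W : Type*} [Fintype W] [LinearOrder W]

/-- Faces of `Λ_d`. -/
def IsFaceF (c : V → ℕ) (a : ℕ → ℕ) (m d : ℕ) (σ : Finset V) : Prop :=
  σ.card ≤ d ∧ ∀ i ∈ Finset.Icc 1 m, (σ.filter (fun v => c v = i)).card ≤ a i

def FVec (M : Finset (W →₀ ℕ)) (j : ℕ) : ℕ := (M.filter (fun μ => degM μ = j)).card

/-! Evaluating the defining identity of the h-vector at `X = 1` gives
`f_{d-1}(Λ_d) = ∑ hᵢ`, and `∑ hᵢ = ∑ Fᵢ(M) = |M| ≤ |S|`. The facets of `Δ` are facets of `Λ_d`, and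
a map `Φ` from a finite set to one at least as large that has a right inverse `Ψ` is a bijection,
hence so is `Ψ`. -/

open Polynomial in
theorem eq_sum_of_sum_C_mul_X_sub_one_pow_eq {R : Type*} [CommRing R] {d : ℕ} {f g : ℕ → R}
    (hfg : ∑ i ∈ range (d + 1), C (f i) * (X - 1) ^ (d - i)
      = ∑ i ∈ range (d + 1), C (g i) * X ^ (d - i)) :
    f d = ∑ i ∈ range (d + 1), g i := by
  have hfg₁ := congrArg (eval (1 : R)) hfg
  simp only [eval_finsetSum, eval_mul, eval_pow, eval_sub, eval_one, eval_C, eval_X, sub_self,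
    one_pow, mul_one] at hfg₁
  rwa [sum_eq_single_of_mem d (self_mem_range_succ d) fun i hi hne => ?_, Nat.sub_self, pow_zero,
    mul_one] at hfg₁
  rw [zero_pow (Nat.sub_ne_zero_of_lt ((mem_range_succ_iff.1 hi).lt_of_ne hne)), mul_zero]

theorem card_eq_sum_FVec {α : Type*} [Fintype α] {M : Finset (α →₀ ℕ)} {d : ℕ}
    (hM : ∀ μ ∈ M, degM μ ≤ d) : M.card = ∑ i ∈ range (d + 1), FVec M i :=
  card_eq_sum_card_fiberwise fun μ hμ => mem_range_succ_iff.2 (hM μ hμ)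

theorem isFacetF_iff {α : Type*} {c : α → ℕ} {a : ℕ → ℕ} {m d : ℕ} {τ : Finset α} :
    IsFacetF c a m d τ ↔ IsFaceF c a m d τ ∧ τ.card = d :=
  ⟨fun h => ⟨⟨h.1.le, h.2⟩, h.1⟩, fun h => ⟨h.2, h.1.2⟩⟩

theorem nat_card_isFacetF {α : Type*} {c : α → ℕ} {a : ℕ → ℕ} {m d : ℕ} {L : Finset (Finset α)}
    (hL : ∀ σ, σ ∈ L ↔ IsFaceF c a m d σ) :
    Nat.card {τ // IsFacetF c a m d τ} = (L.filter (·.card = d)).card := by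
  rw [← Nat.card_eq_finsetCard]
  exact Nat.card_congr (Equiv.subtypeEquivRight fun τ => by rw [mem_filter, hL, isFacetF_iff])

theorem Function.LeftInverse.bijective_of_nat_card_le {α β : Type*} [Finite α] {Φ : α → β}
    {Ψ : β → α} (h : Function.LeftInverse Φ Ψ) (hcard : Nat.card α ≤ Nat.card β) :
    Function.Bijective Φ ∧ Function.Bijective Ψ :=
  ⟨h.surjective.bijective_of_nat_card_le hcard, h.injective.bijective_of_nat_card_le hcard⟩

open Classical Polynomial in
theorem stmt19_general (c : V → ℕ) (cx : W → ℕ) (a : ℕ → ℕ) (m d : ℕ)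
    -- `S` as a finite set of monomials
    (Sfin : Finset (W →₀ ℕ)) (hSfin : ∀ μ, μ ∈ Sfin ↔ InS cx a m d μ)
    -- the complex `Λ_d` as a finite set of faces
    (LamF : Finset (Finset V)) (hLamF : ∀ σ, σ ∈ LamF ↔ IsFaceF c a m d σ)
    -- `Δ`: a pure `(d-1)`-dimensional complex whose facets are facets of `Λ_d`
    (Δ : Finset (Finset V))
    (hΔfac : ∀ τ ∈ Δ, τ.card = d → IsFacetF c a m d τ)
    -- the h-vector of `Λ_d`…
    (h : ℕ → ℕ)
    (hpoly : ∑ i ∈ Finset.range (d + 1),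
        (C (((LamF.filter (fun σ => σ.card = i)).card : ℤ))) * (X - 1) ^ (d - i)
      = ∑ i ∈ Finset.range (d + 1), (C ((h i : ℤ))) * X ^ (d - i))
    -- …is the F-vector of a sub-multicomplex `M ⊆ S`
    (M : Finset (W →₀ ℕ)) (hMsub : M ⊆ Sfin)
    (hFM : ∀ i, i ≤ d → FVec M i = h i) :
    (Δ.filter (fun τ => τ.card = d)).card ≤ Sfin.card ∧
    (∀ (Φ : {τ : Finset V // IsFacetF c a m d τ} → {μ : W →₀ ℕ // μ ∈ Sfin})
        (Ψ : {μ : W →₀ ℕ // μ ∈ Sfin} → {τ : Finset V // IsFacetF c a m d τ}),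
      (∀ μ, Φ (Ψ μ) = μ) → Function.Bijective Φ ∧ Function.Bijective Ψ) := by
  have hfacets : (LamF.filter (·.card = d)).card = M.card := by
    rw [card_eq_sum_FVec fun μ hμ => ((hSfin μ).1 (hMsub hμ)).1,
      sum_congr rfl fun i hi => hFM i (mem_range_succ_iff.1 hi)]
    exact_mod_cast eq_sum_of_sum_C_mul_X_sub_one_pow_eq hpoly
  have hle : (LamF.filter (·.card = d)).card ≤ Sfin.card := hfacets ▸ card_le_card hMsub
  refine ⟨(card_le_card fun τ hτ => ?_).trans hle, fun Φ Ψ hΦΨ => ?_⟩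
  · rw [mem_filter] at hτ ⊢
    exact ⟨(hLamF τ).2 (isFacetF_iff.1 (hΔfac τ hτ.1 hτ.2)).1, hτ.2⟩
  · refine Function.LeftInverse.bijective_of_nat_card_le hΦΨ ?_
    rwa [nat_card_isFacetF hLamF, Nat.card_eq_finsetCard]

open Classical Polynomial in
/-- The counting argument of Lemma `inverse`: since the h-vector of `Λ_d` is the F-vector
of a sub-multicomplex of `S = S_d(X,(∞,a))`, any pure `(d-1)`-complex `Δ` whose facets are
facets of `Λ_d` has at most `|S|` facets; in particular, given maps
`Φ : fac(Λ_d) → S` and `Ψ : S → fac(Λ_d)` with `Φ ∘ Ψ = id`, both are bijections. -/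
theorem stmt19 (c : V → ℕ) (cx : W → ℕ) (a n : ℕ → ℕ) (m d : ℕ)
    (hm : 1 ≤ m) (hd1 : 1 ≤ d) (hd2 : d ≤ ∑ i ∈ Finset.Icc 1 m, a i)
    (hc : ∀ v, 1 ≤ c v ∧ c v ≤ m)
    (hsizeV : ∀ i ∈ Finset.Icc 1 m, (Finset.univ.filter (fun v : V => c v = i)).card = n i)
    (horderV : ∀ v w : V, c v < c w → w < v)
    (ha : ∀ i ∈ Finset.Icc 1 m, 0 < a i ∧ a i ≤ n i)
    (hcx : ∀ x : W, cx x ≤ m) (horderW : ∀ x y : W, cx x < cx y → y < x)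
    (hX0 : (Finset.univ.filter (fun x : W => cx x = 0)).card = (∑ i ∈ Finset.Icc 1 m, a i) - d)
    (hXi : ∀ i ∈ Finset.Icc 1 m, (Finset.univ.filter (fun x : W => cx x = i)).card = n i - a i)
    -- `S` as a finite set of monomials
    (Sfin : Finset (W →₀ ℕ)) (hSfin : ∀ μ, μ ∈ Sfin ↔ InS cx a m d μ)
    -- the complex `Λ_d` as a finite set of faces
    (LamF : Finset (Finset V)) (hLamF : ∀ σ, σ ∈ LamF ↔ IsFaceF c a m d σ)
    -- `Δ`: a pure `(d-1)`-dimensional complex whose facets are facets of `Λ_d`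
    (Δ : Finset (Finset V))
    (hΔdc : ∀ σ ∈ Δ, ∀ ρ ⊆ σ, ρ ∈ Δ)
    (hΔpure : ∀ σ ∈ Δ, ∃ τ ∈ Δ, τ.card = d ∧ σ ⊆ τ)
    (hΔfac : ∀ τ ∈ Δ, τ.card = d → IsFacetF c a m d τ)
    -- the h-vector of `Λ_d`…
    (h : ℕ → ℕ)
    (hpoly : ∑ i ∈ Finset.range (d + 1),
        (C (((LamF.filter (fun σ => σ.card = i)).card : ℤ))) * (X - 1) ^ (d - i)
      = ∑ i ∈ Finset.range (d + 1), (C ((h i : ℤ))) * X ^ (d - i))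
    -- …is the F-vector of a sub-multicomplex `M ⊆ S`
    (M : Finset (W →₀ ℕ)) (hMsub : M ⊆ Sfin) (hMdc : DivClosed M)
    (hFM : ∀ i, i ≤ d → FVec M i = h i) :
    (Δ.filter (fun τ => τ.card = d)).card ≤ Sfin.card ∧
    (∀ (Φ : {τ : Finset V // IsFacetF c a m d τ} → {μ : W →₀ ℕ // μ ∈ Sfin})
        (Ψ : {μ : W →₀ ℕ // μ ∈ Sfin} → {τ : Finset V // IsFacetF c a m d τ}),
      (∀ μ, Φ (Ψ μ) = μ) → Function.Bijective Φ ∧ Function.Bijective Ψ) :=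
  stmt19_general c cx a m d Sfin hSfin LamF hLamF Δ hΔfac h hpoly M hMsub hFM
end
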